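/- arXiv:2205.00342 — 9 statements merged into one kernel-verified Lean document; each statement's English description precedes it below -/
import Mathlib

section
/- Let R be a commutative ring, let I be an ideal of R, and let s be a positive integer with I^s = 0. Let f be an m-variate polynomial over R and let a = (a_1,…,a_m), b = (b_1,…,b_m) ∈ R^m be such that a_i − b_i ∈ I for all i ∈ [m]. Then f(a) = Σ_{e ∈ ℕ^m, |e|_1 < s} ∂̄_e(f)(b) · (a−b)^e, where (a−b)^e = ∏_{i=1}^m (a_i − b_i)^{e_i}. -/
/-- The Hasse derivative of an `m`-variate polynomial `f` with respect to the monomial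
`x^e`: the coefficient of `z^e` in `f(x + z) ∈ (R[x])[z]`. -/
noncomputable def mvHasseDeriv {R : Type*} [CommRing R] {m : ℕ} (e : Fin m →₀ ℕ)
    (f : MvPolynomial (Fin m) R) : MvPolynomial (Fin m) R :=
  MvPolynomial.coeff e
    (MvPolynomial.aeval
      (fun i => (MvPolynomial.C (MvPolynomial.X i) + MvPolynomial.X i :
        MvPolynomial (Fin m) (MvPolynomial (Fin m) R))) f)

/-- if `I^s = 0` and `a_i − b_i ∈ I` for all `i`, then
`f(a) = Σ_{e ∈ ℕ^m, |e|₁ < s} ∂̄_e(f)(b) · (a−b)^e`. -/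
theorem eval_eq_sum_hasseDeriv_of_nilpotent {R : Type*} [CommRing R] {m : ℕ}
    (I : Ideal R) (s : ℕ) (hs : 0 < s) (hI : I ^ s = ⊥)
    (f : MvPolynomial (Fin m) R) (a b : Fin m → R)
    (hab : ∀ i, a i - b i ∈ I) :
    MvPolynomial.eval a f =
      ∑ e ∈ (Fintype.piFinset fun _ : Fin m => Finset.range s).filter
          (fun e => ∑ i, e i < s),
        MvPolynomial.eval b (mvHasseDeriv (Finsupp.equivFunOnFinite.symm e) f) *
          ∏ i, (a i - b i) ^ e i := by
  classical
  set g : MvPolynomial (Fin m) (MvPolynomial (Fin m) R) :=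
    MvPolynomial.aeval
      (fun i => (MvPolynomial.C (MvPolynomial.X i) + MvPolynomial.X i :
        MvPolynomial (Fin m) (MvPolynomial (Fin m) R))) f with hg
  have key : MvPolynomial.eval a f =
      MvPolynomial.eval₂ (MvPolynomial.eval b) (fun i => a i - b i) g := by
    rw [hg]
    induction f using MvPolynomial.induction_on with
    | C r => simp
    | add p q hp hq => simp [hp, hq]
    | mul_X p i hp =>
      simp only [map_mul, MvPolynomial.aeval_X, MvPolynomial.eval₂_mul,
        MvPolynomial.eval₂_add, MvPolynomial.eval₂_C, MvPolynomial.eval₂_X,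
        MvPolynomial.eval_mul, MvPolynomial.eval_X, hp]
      ring
  have hprod : ∀ d : Fin m →₀ ℕ, s ≤ ∑ i, d i →
      (∏ i, (a i - b i) ^ d i) = 0 := by
    intro d hd
    have hmem : ∀ t : Finset (Fin m),
        (∏ i ∈ t, (a i - b i) ^ d i) ∈ I ^ (∑ i ∈ t, d i) := by
      intro t
      induction t using Finset.cons_induction with
      | empty => simp [Ideal.one_eq_top]
      | cons i t hi ih =>
        rw [Finset.prod_cons, Finset.sum_cons, pow_add]
        exact Ideal.mul_mem_mul (Ideal.pow_mem_pow (hab i) _) ih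
    have h2 : (∏ i, (a i - b i) ^ d i) ∈ I ^ s :=
      Ideal.pow_le_pow_right hd (hmem Finset.univ)
    simpa [hI] using h2
  set F : (Fin m →₀ ℕ) → R := fun d =>
    MvPolynomial.eval b (g.coeff d) * ∏ i, (a i - b i) ^ d i with hF
  set T : Finset (Fin m →₀ ℕ) :=
    (((Fintype.piFinset fun _ : Fin m => Finset.range s).filter
        fun e => ∑ i, e i < s).map Finsupp.equivFunOnFinite.symm.toEmbedding) with hT
  have hTmem : ∀ d : Fin m →₀ ℕ, d ∈ T ↔ ∑ i, d i < s := by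
    intro d
    rw [hT, Finset.mem_map_equiv]
    simp only [Equiv.symm_symm, Finset.mem_filter, Fintype.mem_piFinset, Finset.mem_range,
      Finsupp.equivFunOnFinite_apply]
    constructor
    · exact fun h => h.2
    · intro h
      refine ⟨fun i => lt_of_le_of_lt ?_ h, h⟩
      exact Finset.single_le_sum (fun j _ => Nat.zero_le _) (Finset.mem_univ i)
  have h1 : ∑ d ∈ g.support, F d = ∑ d ∈ g.support ∪ T, F d :=
    Finset.sum_subset Finset.subset_union_left (by
      intro d _ hd
      have h0 : g.coeff d = 0 := MvPolynomial.notMem_support_iff.mp hd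
      simp [hF, h0])
  have h2 : ∑ d ∈ T, F d = ∑ d ∈ g.support ∪ T, F d :=
    Finset.sum_subset Finset.subset_union_right (by
      intro d _ hd
      have hle : s ≤ ∑ i, d i := le_of_not_gt (fun h => hd ((hTmem d).mpr h))
      simp [hF, hprod d hle])
  have hsum : ∑ d ∈ g.support, F d = ∑ d ∈ T, F d := h1.trans h2.symm
  rw [key, MvPolynomial.eval₂_eq']
  have : ∑ d ∈ g.support, F d =
      ∑ e ∈ (Fintype.piFinset fun _ : Fin m => Finset.range s).filter
          (fun e => ∑ i, e i < s),
        MvPolynomial.eval b (mvHasseDeriv (Finsupp.equivFunOnFinite.symm e) f) *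
          ∏ i, (a i - b i) ^ e i := by
    rw [hsum, hT, Finset.sum_map]
    refine Finset.sum_congr rfl fun e _ => ?_
    simp only [hF, Equiv.coe_toEmbedding, Finsupp.coe_equivFunOnFinite_symm]
    rfl
  simpa [hF] using this
end

section
/- For every integer N ≥ 2, the product of all prime numbers p with p ≤ 16·log₂(N) is strictly greater than N. -/
open scoped Classical

private lemma aux_t (t : ℕ) (ht : 10 ≤ t) : 4 * t ^ 2 ≤ 2 ^ (t - 1) := by
  obtain ⟨j, rfl⟩ : ∃ j, t = j + 10 := ⟨t - 10, by omega⟩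
  have : ∀ j : ℕ, 4 * (j + 10) ^ 2 ≤ 2 ^ (j + 9) := by
    intro j
    induction j with
    | zero => norm_num
    | succ i ih =>
      have h1 : 4 * (i + 1 + 10) ^ 2 ≤ 2 * (4 * (i + 10) ^ 2) := by zify; nlinarith [sq_nonneg (i:ℤ), (by positivity : (0:ℤ) ≤ (i:ℤ))]
      calc 4 * (i + 1 + 10) ^ 2 ≤ 2 * (4 * (i + 10) ^ 2) := h1
        _ ≤ 2 * 2 ^ (i + 9) := by omega
        _ = 2 ^ (i + 1 + 9) := by ring
  simpa using this j

private lemma countA (n : ℕ) (hn : 8 ≤ n) :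
    2 ^ (n - 1) < n ^ (((Finset.range (n + 1)).filter Nat.Prime).card + 1) := by
  set S := (Finset.range (n + 1)).filter Nat.Prime with hS
  set k := S.card with hk
  set m := n / 2 with hm
  have hm4 : 4 ≤ m := by omega
  have h1 : 4 ^ m < m * m.centralBinom := Nat.four_pow_lt_mul_centralBinom m hm4
  have hC0 : m.centralBinom ≠ 0 := (Nat.centralBinom_pos m).ne'
  -- prime factors of centralBinom m are ≤ 2m ≤ n
  have hsub : m.centralBinom.primeFactors ⊆ S := by
    intro p hp
    rw [Nat.mem_primeFactors] at hp
    obtain ⟨hp_prime, hp_dvd, -⟩ := hp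
    have hdvd_fact : m.centralBinom ∣ (2 * m).factorial := by
      have := Nat.choose_mul_factorial_mul_factorial (show m ≤ 2 * m by omega)
      rw [show 2 * m - m = m by omega] at this
      exact ⟨m.factorial * m.factorial, by rw [Nat.centralBinom, ← this]; ring⟩
    have hp_le : p ≤ 2 * m := (Nat.Prime.dvd_factorial hp_prime).mp (hp_dvd.trans hdvd_fact)
    rw [hS, Finset.mem_filter, Finset.mem_range]
    exact ⟨by omega, hp_prime⟩
  have h2 : m.centralBinom ≤ (2 * m) ^ k := by
    calc m.centralBinom = m.centralBinom.factorization.prod (· ^ ·) :=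
          (Nat.factorization_prod_pow_eq_self hC0).symm
      _ = ∏ p ∈ m.centralBinom.primeFactors, p ^ m.centralBinom.factorization p := by
          rw [Finsupp.prod, Nat.support_factorization]
      _ ≤ ∏ _p ∈ m.centralBinom.primeFactors, (2 * m) := by
          apply Finset.prod_le_prod'
          intro p _
          have : p ^ ((2 * m).choose m).factorization p ≤ 2 * m :=
            Nat.pow_factorization_choose_le (by omega)
          simpa [Nat.centralBinom] using this
      _ = (2 * m) ^ m.centralBinom.primeFactors.card := by rw [Finset.prod_const]
      _ ≤ (2 * m) ^ k := Nat.pow_le_pow_right (by omega) (Finset.card_le_card hsub)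
  have h3 : (2 * m) ^ k ≤ n ^ k := Nat.pow_le_pow_left (by omega) k
  have h4 : 4 ^ m < n ^ (k + 1) := by
    calc 4 ^ m < m * m.centralBinom := h1
      _ ≤ m * (2 * m) ^ k := Nat.mul_le_mul_left m h2
      _ ≤ n * n ^ k := Nat.mul_le_mul (by omega) h3
      _ = n ^ (k + 1) := by ring
  calc 2 ^ (n - 1) ≤ 2 ^ (2 * m) := Nat.pow_le_pow_right (by omega) (by omega)
    _ = 4 ^ m := by rw [pow_mul]; norm_num
    _ < n ^ (k + 1) := h4

private lemma gen_bound (n : ℕ) (hn : 512 ≤ n) :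
    2 ^ (n + 1) ≤ (∏ p ∈ (Finset.range (n + 1)).filter Nat.Prime, p) ^ 16 := by
  set S := (Finset.range (n + 1)).filter Nat.Prime with hS
  set k := S.card with hk
  set P := ∏ p ∈ S, p with hP
  have hn0 : n ≠ 0 := by omega
  set t := Nat.log 2 n + 1 with ht
  have ht_lt : n < 2 ^ t := Nat.lt_pow_succ_log_self (by norm_num) n
  have ht_le : 2 ^ (t - 1) ≤ n := by
    have := Nat.pow_log_le_self 2 hn0
    simpa [ht] using this
  have ht10 : 10 ≤ t := by
    have h9 : 9 ≤ Nat.log 2 n :=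
      (Nat.le_log_iff_pow_le (by norm_num) hn0).mpr (by norm_num; omega)
    omega
  have htn : 4 * t ^ 2 ≤ n := le_trans (aux_t t ht10) ht_le
  set s := Nat.sqrt n with hs
  have hss : s * s ≤ n := Nat.sqrt_le' n |>.trans_eq' (by rw [sq])
  have hlt : n < (s + 1) ^ 2 := Nat.lt_succ_sqrt' n
  have hts : 2 * t ≤ s := Nat.le_sqrt.mpr (by nlinarith)
  have hs4 : 4 ≤ s := by omega
  have hA : 2 ^ (n - 1) < n ^ (k + 1) := countA n (by omega)
  have hntk : n ≤ t * (k + 1) := by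
    have h5 : 2 ^ (n - 1) < 2 ^ (t * (k + 1)) := by
      calc 2 ^ (n - 1) < n ^ (k + 1) := hA
        _ ≤ (2 ^ t) ^ (k + 1) := Nat.pow_le_pow_left ht_lt.le _
        _ = 2 ^ (t * (k + 1)) := by rw [← pow_mul]
    have := (Nat.pow_lt_pow_iff_right (by norm_num : 1 < 2)).mp h5
    omega
  have hk6 : 8 * s + 10 ≤ 6 * k := by
    have h1 : t * (8 * s + 16) ≤ 6 * n := by nlinarith
    have h2 : t * (8 * s + 16) ≤ t * (6 * (k + 1)) := by
      calc t * (8 * s + 16) ≤ 6 * n := h1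
        _ ≤ 6 * (t * (k + 1)) := by omega
        _ = t * (6 * (k + 1)) := by ring
    have h3 : 8 * s + 16 ≤ 6 * (k + 1) := Nat.le_of_mul_le_mul_left h2 (by omega)
    omega
  have hks : s + 2 ≤ k := by omega
  have hB : (s + 1) ^ (k - (s + 1)) ≤ P := by
    have heq := Finset.card_filter_add_card_filter_not
      (s := S) (p := fun p => s + 1 ≤ p)
    have hsmall : (S.filter (fun p => ¬ (s + 1 ≤ p))).card ≤ s + 1 := by
      calc (S.filter (fun p => ¬ (s + 1 ≤ p))).card
          ≤ (Finset.range (s + 1)).card := by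
            apply Finset.card_le_card
            intro p hp
            rw [Finset.mem_filter] at hp
            rw [Finset.mem_range]
            omega
        _ = s + 1 := Finset.card_range _
    have hcard : k - (s + 1) ≤ (S.filter (fun p => s + 1 ≤ p)).card := by omega
    calc (s + 1) ^ (k - (s + 1)) ≤ (s + 1) ^ (S.filter (fun p => s + 1 ≤ p)).card :=
          Nat.pow_le_pow_right (by omega) hcard
      _ ≤ ∏ p ∈ S.filter (fun p => s + 1 ≤ p), p :=
          Finset.pow_card_le_prod _ _ _ (fun p hp => (Finset.mem_filter.mp hp).2)
      _ ≤ P := Finset.prod_le_prod_of_subset_of_one_le' (Finset.filter_subset _ _)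
          (fun p hp _ => (Finset.mem_filter.mp hp).2.one_lt.le)
  calc 2 ^ (n + 1) ≤ 2 ^ (2 * (n - 1)) := Nat.pow_le_pow_right (by omega) (by omega)
    _ = (2 ^ (n - 1)) ^ 2 := by rw [← pow_mul, mul_comm]
    _ ≤ (n ^ (k + 1)) ^ 2 := Nat.pow_le_pow_left hA.le 2
    _ = n ^ (2 * (k + 1)) := by rw [← pow_mul, mul_comm]
    _ ≤ n ^ (8 * (k - (s + 1))) := Nat.pow_le_pow_right (by omega) (by omega)
    _ ≤ ((s + 1) ^ 2) ^ (8 * (k - (s + 1))) := Nat.pow_le_pow_left hlt.le _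
    _ = ((s + 1) ^ (k - (s + 1))) ^ 16 := by rw [← pow_mul, ← pow_mul]; ring_nf
    _ ≤ P ^ 16 := Nat.pow_le_pow_left hB 16

private lemma primorial16 : (30030 : ℕ) = ∏ p ∈ (Finset.range 17).filter Nat.Prime, p := by
  decide

private lemma primorial64 : (2 : ℕ) ^ 32 ≤ ∏ p ∈ (Finset.range 65).filter Nat.Prime, p := by
  decide

/-- for every integer `N ≥ 2`, the product of all primes `p ≤ 16·log₂ N`
is strictly greater than `N`. (Every such prime satisfies `p ≤ 16·N < 16·N + 1`,
so the finite set of all such primes is realized as a filtered range.) -/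
theorem product_of_small_primes_gt (N : ℕ) (hN : 2 ≤ N) :
    N < ∏ p ∈ (Finset.range (16 * N + 1)).filter
        (fun p => Nat.Prime p ∧ (p : ℝ) ≤ 16 * Real.logb 2 N), p := by
  have hN0 : (0 : ℝ) < N := by positivity
  set L := Real.logb 2 N with hL
  have hL1 : 1 ≤ L := by
    have := (Real.logb_le_logb (by norm_num : (1:ℝ) < 2) (by norm_num : (0:ℝ) < 2) hN0).mpr
      (by exact_mod_cast hN)
    simpa using this
  have hL0 : (0 : ℝ) ≤ 16 * L := by linarith
  set n := ⌊16 * L⌋₊ with hn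
  have hn16 : 16 ≤ n := Nat.le_floor (by push_cast; linarith)
  have hLN : L ≤ (N : ℝ) := by
    have h2N : (N : ℝ) ≤ 2 ^ (N : ℕ) := by exact_mod_cast (Nat.lt_two_pow_self (n := N)).le
    have := (Real.logb_le_logb (by norm_num : (1:ℝ) < 2) hN0 (by positivity)).mpr h2N
    rw [Real.logb_pow] at this
    simpa using this
  have hnN : n ≤ 16 * N := by
    calc n ≤ ⌊((16 * N : ℕ) : ℝ)⌋₊ := Nat.floor_le_floor (by push_cast; linarith)
      _ = 16 * N := Nat.floor_natCast _
  have hset : (Finset.range (16 * N + 1)).filter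
      (fun p => Nat.Prime p ∧ (p : ℝ) ≤ 16 * Real.logb 2 N)
      = (Finset.range (n + 1)).filter Nat.Prime := by
    ext p
    simp only [Finset.mem_filter, Finset.mem_range]
    constructor
    · rintro ⟨-, hp, hple⟩
      have : p ≤ n := (Nat.le_floor_iff hL0).mpr hple
      exact ⟨by omega, hp⟩
    · rintro ⟨hpn, hp⟩
      have h1 : (p : ℝ) ≤ 16 * L := by
        have : p ≤ n := by omega
        exact (Nat.le_floor_iff hL0).mp this
      exact ⟨by omega, hp, h1⟩
  rw [hset]
  set P := ∏ p ∈ (Finset.range (n + 1)).filter Nat.Prime, p with hP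
  have hmono : ∀ m : ℕ, m + 1 ≤ n + 1 →
      (∏ p ∈ (Finset.range (m + 1)).filter Nat.Prime, p) ≤ P := by
    intro m hm
    apply Finset.prod_le_prod_of_subset_of_one_le'
    · exact Finset.filter_subset_filter _ (Finset.range_subset_range.mpr hm)
    · exact fun i hi _ => (Finset.mem_filter.mp hi).2.one_lt.le
  rcases lt_or_ge N 30030 with hsmall | hbig
  · -- N < 30030 : primes up to 16 suffice
    have h16 : (30030 : ℕ) ≤ P := by
      rw [primorial16]; exact hmono 16 (by omega)
    omega
  · rcases lt_or_ge N (2 ^ 32) with hmid | hlarge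
    · -- 30030 ≤ N < 2^32 : primes up to 64 suffice
      have hL4 : 4 ≤ L := by
        have h16N : (16 : ℝ) ≤ N := by
          have : (16 : ℕ) ≤ N := by omega
          exact_mod_cast this
        have := (Real.logb_le_logb (by norm_num : (1:ℝ) < 2) (by norm_num) hN0).mpr h16N
        have h16eq : Real.logb 2 16 = 4 := by
          rw [show (16 : ℝ) = 2 ^ (4:ℕ) by norm_num, Real.logb_pow]
          simp
        rw [h16eq] at this
        exact this
      have hn64 : 64 ≤ n := Nat.le_floor (by push_cast; linarith)
      have h64 : (2 : ℕ) ^ 32 ≤ P := le_trans primorial64 (hmono 64 (by omega))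
      omega
    · -- 2^32 ≤ N : general Chebyshev-type bound
      have hL32 : 32 ≤ L := by
        have h1 : ((2:ℝ) ^ (32:ℕ)) ≤ (N:ℝ) := by exact_mod_cast hlarge
        have h2 := (Real.logb_le_logb (by norm_num : (1:ℝ) < 2) (by positivity) hN0).mpr h1
        rw [Real.logb_pow] at h2
        simpa using h2
      have hn512 : 512 ≤ n := Nat.le_floor (by push_cast; linarith)
      have hgen : 2 ^ (n + 1) ≤ P ^ 16 := gen_bound n hn512
      have hNpow : N ^ 16 < 2 ^ (n + 1) := by
        have h2L : (2 : ℝ) ^ L = N := Real.rpow_logb (by norm_num) (by norm_num) hN0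
        have key : ((N : ℕ) : ℝ) ^ (16 : ℕ) < ((2 : ℕ) : ℝ) ^ ((n + 1 : ℕ) : ℝ) := by
          push_cast
          rw [← h2L, ← Real.rpow_natCast ((2:ℝ) ^ L) 16, ← Real.rpow_mul (by norm_num)]
          apply Real.rpow_lt_rpow_of_exponent_lt (by norm_num)
          have := Nat.lt_succ_floor (16 * L)
          push_cast at this
          push_cast
          linarith
        rw [Real.rpow_natCast] at key
        exact_mod_cast key
      have hfin : N ^ 16 < P ^ 16 := lt_of_lt_of_le hNpow hgen
      exact (Nat.pow_lt_pow_iff_left (by norm_num : (16:ℕ) ≠ 0)).mp hfin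
end

section
/- Let a > 1, c > 0 and δ > 2 be real numbers, and let x, Q be real numbers with δ < Q ≤ x and x ≥ 16. Suppose that (i) Σ_{t=1}^{⌊Q⌋} |π(x, t) − π(x)/φ(t)| ≤ c·x·(log x)^{−a}, (ii) π(x) ≥ x/(2·log x), and (iii) δ·c·(log x)^{1−a} ≤ 1/4. Then there exists an integer t₀ with Q·(1 − 2/δ) ≤ t₀ ≤ Q such that π(x, t₀) ≥ x/(4·Q·log x). -/
open scoped Classical

/-- `π(x)`: the number of primes `p ≤ x`. -/
noncomputable def primePi (x : ℝ) : ℕ :=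
  ((Finset.range (⌊x⌋₊ + 1)).filter (fun p => Nat.Prime p ∧ (p : ℝ) ≤ x)).card

/-- `π(x, t)`: the number of primes `p ≤ x` with `p ≡ 1 (mod t)`. -/
noncomputable def primePiAP (x : ℝ) (t : ℕ) : ℕ :=
  ((Finset.range (⌊x⌋₊ + 1)).filter
    (fun p => Nat.Prime p ∧ (p : ℝ) ≤ x ∧ p ≡ 1 [MOD t])).card

/-- worst-case consequence of the Bombieri–Vinogradov type bound. -/
theorem exists_AP_with_many_primes (a c δ x Q : ℝ)
    (ha : 1 < a) (hc : 0 < c) (hδ : 2 < δ) (hδQ : δ < Q) (hQx : Q ≤ x) (hx : 16 ≤ x)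
    (h1 : ∑ t ∈ Finset.Icc 1 ⌊Q⌋₊,
        |(primePiAP x t : ℝ) - (primePi x : ℝ) / (Nat.totient t : ℝ)|
        ≤ c * x * Real.logb 2 x ^ (-a))
    (h2 : x / (2 * Real.logb 2 x) ≤ (primePi x : ℝ))
    (h3 : δ * c * Real.logb 2 x ^ (1 - a) ≤ 1 / 4) :
    ∃ t₀ : ℕ, Q * (1 - 2 / δ) ≤ (t₀ : ℝ) ∧ (t₀ : ℝ) ≤ Q ∧
      x / (4 * Q * Real.logb 2 x) ≤ (primePiAP x t₀ : ℝ) := by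
  by_contra hcon
  push_neg at hcon
  set L := Real.logb 2 x with hLdef
  have hx0 : (0:ℝ) < x := by linarith
  have hδ0 : (0:ℝ) < δ := by linarith
  have hQ0 : (0:ℝ) < Q := by linarith
  have h16 : Real.logb 2 16 = 4 := by
    rw [show (16:ℝ) = 2 ^ (4:ℕ) by norm_num, Real.logb_pow,
      Real.logb_self_eq_one (by norm_num)]
    norm_num
  have hL4 : (4:ℝ) ≤ L := by
    rw [hLdef, ← h16]
    exact Real.logb_le_logb_of_le (by norm_num) (by norm_num) hx
  have hL0 : (0:ℝ) < L := by linarith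
  set A := Q * (1 - 2 / δ) with hAdef
  have hA0 : (0:ℝ) ≤ A := by
    have : 2 / δ < 1 := (div_lt_one hδ0).mpr hδ
    nlinarith
  have hAQ : A ≤ Q := by
    have : 0 < 2 / δ := by positivity
    nlinarith
  set S := Finset.Ioc ⌊A⌋₊ ⌊Q⌋₊ with hSdef
  have hε0 : (0:ℝ) < x / (4 * Q * L) :=
    div_pos hx0 (mul_pos (mul_pos (by norm_num) hQ0) hL0)
  have key : ∀ t ∈ S, x / (4 * Q * L) ≤
      |(primePiAP x t : ℝ) - (primePi x : ℝ) / (Nat.totient t : ℝ)| := by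
    intro t ht
    rw [hSdef, Finset.mem_Ioc] at ht
    have ht1 : 1 ≤ t := by omega
    have htA : A < (t:ℝ) := by
      have h1' : (⌊A⌋₊:ℝ) + 1 ≤ (t:ℝ) := by exact_mod_cast ht.1
      have := Nat.lt_floor_add_one A
      linarith
    have htQ : (t:ℝ) ≤ Q := le_trans (Nat.cast_le.mpr ht.2) (Nat.floor_le hQ0.le)
    have hπ : (primePiAP x t : ℝ) < x / (4 * Q * L) := hcon t htA.le htQ
    have hφ1 : (1:ℝ) ≤ (Nat.totient t : ℝ) := by
      exact_mod_cast Nat.totient_pos.mpr ht1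
    have hφQ : (Nat.totient t : ℝ) ≤ Q :=
      le_trans (by exact_mod_cast Nat.totient_le t) htQ
    have hlow : x / (2 * Q * L) ≤ (primePi x : ℝ) / (Nat.totient t : ℝ) := by
      calc x / (2 * Q * L) = (x / (2 * L)) / Q := by
            rw [div_div]; ring_nf
        _ ≤ (primePi x : ℝ) / (Nat.totient t : ℝ) :=
            div_le_div₀ (Nat.cast_nonneg _) h2 (by linarith) hφQ
    have heq : x / (2 * Q * L) - x / (4 * Q * L) = x / (4 * Q * L) := by
      field_simp
      ring
    have hstep : x / (4 * Q * L) ≤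
        (primePi x : ℝ) / (Nat.totient t : ℝ) - (primePiAP x t : ℝ) := by
      linarith
    calc x / (4 * Q * L)
        ≤ (primePi x : ℝ) / (Nat.totient t : ℝ) - (primePiAP x t : ℝ) := hstep
      _ ≤ |(primePi x : ℝ) / (Nat.totient t : ℝ) - (primePiAP x t : ℝ)| := le_abs_self _
      _ = |(primePiAP x t : ℝ) - (primePi x : ℝ) / (Nat.totient t : ℝ)| := abs_sub_comm _ _
  have hsub : S ⊆ Finset.Icc 1 ⌊Q⌋₊ := by
    intro t ht
    rw [hSdef, Finset.mem_Ioc] at ht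
    rw [Finset.mem_Icc]
    omega
  have hsum1 : (S.card : ℝ) * (x / (4 * Q * L)) ≤
      ∑ t ∈ S, |(primePiAP x t : ℝ) - (primePi x : ℝ) / (Nat.totient t : ℝ)| := by
    have := Finset.card_nsmul_le_sum S
      (fun t => |(primePiAP x t : ℝ) - (primePi x : ℝ) / (Nat.totient t : ℝ)|)
      (x / (4 * Q * L)) key
    simpa [nsmul_eq_mul] using this
  have hsum2 : ∑ t ∈ S, |(primePiAP x t : ℝ) - (primePi x : ℝ) / (Nat.totient t : ℝ)| ≤
      ∑ t ∈ Finset.Icc 1 ⌊Q⌋₊, |(primePiAP x t : ℝ) - (primePi x : ℝ) / (Nat.totient t : ℝ)| :=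
    Finset.sum_le_sum_of_subset_of_nonneg hsub (fun i _ _ => abs_nonneg _)
  have hcard : Q / δ < (S.card : ℝ) := by
    have hfl : ⌊A⌋₊ ≤ ⌊Q⌋₊ := Nat.floor_le_floor hAQ
    have hcardeq : (S.card : ℝ) = (⌊Q⌋₊ : ℝ) - (⌊A⌋₊ : ℝ) := by
      rw [hSdef, Nat.card_Ioc]
      push_cast [Nat.cast_sub hfl]
      ring
    have h1' : Q - 1 < (⌊Q⌋₊ : ℝ) := Nat.sub_one_lt_floor Q
    have h2' : (⌊A⌋₊ : ℝ) ≤ A := Nat.floor_le hA0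
    have hQδ : 1 < Q / δ := (one_lt_div hδ0).mpr hδQ
    have hAeq : A = Q - 2 * (Q / δ) := by
      rw [hAdef]; field_simp
    rw [hcardeq]
    linarith
  have hP0 : (0:ℝ) < L ^ (-a) := Real.rpow_pos_of_pos hL0 _
  have hh : δ * c * (L * L ^ (-a)) ≤ 1 / 4 := by
    have : L ^ (1 - a) = L * L ^ (-a) := by
      rw [show (1:ℝ) - a = 1 + (-a) by ring, Real.rpow_add hL0, Real.rpow_one]
    rw [← this]
    exact h3
  have hfinal : c * x * L ^ (-a) ≤ (Q / δ) * (x / (4 * Q * L)) := by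
    have hRQ : (Q / δ) * (x / (4 * Q * L)) = x / (4 * δ * L) := by
      field_simp
    rw [hRQ, le_div_iff₀ (by positivity)]
    nlinarith [mul_le_mul_of_nonneg_left hh hx0.le]
  have : Q / δ * (x / (4 * Q * L)) < (S.card : ℝ) * (x / (4 * Q * L)) :=
    mul_lt_mul_of_pos_right hcard hε0
  linarith
end

section
/- Let F_q be a finite field with q elements, let m ∈ ℕ, and let u ∈ ℕ be such that u + 1 divides q − 1 (so that u + 1 is a nonzero, hence invertible, element of F_q). Define K := { ( ((α_1·(u+1)^{-1}) + τ)^{u+1} − τ^{u+1}, …, ((α_m·(u+1)^{-1}) + τ)^{u+1} − τ^{u+1} ) : α_1, …, α_m, τ ∈ F_q } ⊆ F_q^m. Then |K| ≤ ((q − 1)/(u + 1) + 1)^{m+1}. -/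
theorem pow_image_card_le {F : Type*} [Field F] [Fintype F] (q u : ℕ)
    (hq : Fintype.card F = q) (hdvd : u + 1 ∣ q - 1) :
    (Set.range (fun x : F => x ^ (u + 1))).ncard ≤ (q - 1) / (u + 1) + 1 := by
  classical
  have hcardU : Nat.card Fˣ = q - 1 := by
    rw [Nat.card_eq_fintype_card, Fintype.card_units, hq]
  set φ : Fˣ →* Fˣ := powMonoidHom (u + 1) with hφ
  -- kernel has at least u+1 elements
  obtain ⟨g, hg⟩ := IsCyclic.exists_ofOrder_eq_natCard (α := Fˣ)
  have hdvd' : (q - 1) / (u + 1) ∣ orderOf g := by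
    rw [hg, hcardU]; exact Nat.div_dvd_of_dvd hdvd
  have hgne : orderOf g ≠ 0 := (orderOf_pos g).ne'
  have horder : orderOf (g ^ ((q - 1) / (u + 1))) = u + 1 := by
    have h2 := orderOf_pow_orderOf_div (x := g) (n := u + 1) hgne
      (by rw [hg, hcardU]; exact hdvd)
    rwa [hg, hcardU] at h2
  have hker : u + 1 ≤ Nat.card φ.ker := by
    have hle : Subgroup.zpowers (g ^ ((q - 1) / (u + 1))) ≤ φ.ker := by
      rw [Subgroup.zpowers_le, MonoidHom.mem_ker, hφ, powMonoidHom_apply]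
      have h3 := pow_orderOf_eq_one (g ^ ((q - 1) / (u + 1)))
      rwa [horder] at h3
    calc u + 1 = Nat.card (Subgroup.zpowers (g ^ ((q - 1) / (u + 1)))) := by
              rw [Nat.card_zpowers, horder]
      _ ≤ Nat.card φ.ker := Subgroup.card_le_of_le hle
  have hrange : Nat.card φ.range ≤ (q - 1) / (u + 1) := by
    have hprod : Nat.card φ.range * Nat.card φ.ker = q - 1 := by
      rw [← hcardU, Subgroup.card_eq_card_quotient_mul_card_subgroup φ.ker,
        Nat.card_congr (QuotientGroup.quotientKerEquivRange φ).toEquiv]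
    rw [Nat.le_div_iff_mul_le (Nat.succ_pos u)]
    calc Nat.card φ.range * (u + 1) ≤ Nat.card φ.range * Nat.card φ.ker :=
          Nat.mul_le_mul_left _ hker
      _ = q - 1 := hprod
  -- the range of the power map on F
  have hsub : Set.range (fun x : F => x ^ (u + 1)) ⊆
      insert (0 : F) ((fun x : Fˣ => (x : F)) '' (φ.range : Set Fˣ)) := by
    rintro y ⟨x, rfl⟩
    by_cases hx : x = 0
    · left; simp [hx]
    · right
      exact ⟨Units.mk0 x hx ^ (u + 1), ⟨Units.mk0 x hx, rfl⟩, by simp⟩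
  calc (Set.range (fun x : F => x ^ (u + 1))).ncard
      ≤ (insert (0 : F) ((fun x : Fˣ => (x : F)) '' (φ.range : Set Fˣ))).ncard :=
        Set.ncard_le_ncard hsub (Set.toFinite _)
    _ ≤ ((fun x : Fˣ => (x : F)) '' (φ.range : Set Fˣ)).ncard + 1 :=
        Set.ncard_insert_le _ _
    _ = (φ.range : Set Fˣ).ncard + 1 := by
        rw [Set.ncard_image_of_injective _ (fun _ _ h => Units.ext h)]
    _ ≤ (q - 1) / (u + 1) + 1 := by
        rw [← Nat.card_coe_set_eq]
        exact Nat.add_le_add_right hrange 1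

/-- the size of the degree-`u` Kakeya set
`K = {(((α_i·(u+1)⁻¹) + τ)^{u+1} − τ^{u+1})_{i} : α ∈ F_q^m, τ ∈ F_q}`
is at most `((q − 1)/(u + 1) + 1)^{m+1}`. -/
theorem kakeya_set_ncard_le {F : Type*} [Field F] [Fintype F] (q m u : ℕ)
    (hq : Fintype.card F = q) (hdvd : u + 1 ∣ q - 1) :
    Set.ncard {v : Fin m → F | ∃ (α : Fin m → F) (τ : F),
        v = fun i => (α i * (((u + 1 : ℕ) : F))⁻¹ + τ) ^ (u + 1) - τ ^ (u + 1)}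
      ≤ ((q - 1) / (u + 1) + 1) ^ (m + 1) := by
  classical
  set P : Set F := Set.range (fun x : F => x ^ (u + 1)) with hP
  set g : F × (Fin m → F) → (Fin m → F) := fun p => fun i => p.2 i - p.1 with hg
  set S : Set (F × (Fin m → F)) := P ×ˢ Set.univ.pi (fun _ => P) with hS
  have hsub : {v : Fin m → F | ∃ (α : Fin m → F) (τ : F),
      v = fun i => (α i * (((u + 1 : ℕ) : F))⁻¹ + τ) ^ (u + 1) - τ ^ (u + 1)} ⊆ g '' S := by
    rintro v ⟨α, τ, rfl⟩
    refine ⟨(τ ^ (u + 1), fun i => (α i * (((u + 1 : ℕ) : F))⁻¹ + τ) ^ (u + 1)), ?_, rfl⟩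
    exact ⟨⟨τ, rfl⟩, fun i _ => ⟨α i * (((u + 1 : ℕ) : F))⁻¹ + τ, rfl⟩⟩
  have hPcard : P.ncard ≤ (q - 1) / (u + 1) + 1 := pow_image_card_le q u hq hdvd
  have hScard : S.ncard ≤ ((q - 1) / (u + 1) + 1) ^ (m + 1) := by
    have e1 : Nat.card S = Nat.card P * Nat.card P ^ m := by
      rw [hS, Nat.card_congr (Equiv.Set.prod _ _), Nat.card_prod,
        Nat.card_congr (Equiv.Set.univPi (fun _ : Fin m => P)), Nat.card_pi]
      simp
    rw [← Nat.card_coe_set_eq, e1, pow_succ']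
    rw [← Nat.card_coe_set_eq] at hPcard
    exact Nat.mul_le_mul hPcard (Nat.pow_le_pow_left hPcard m)
  calc Set.ncard {v : Fin m → F | ∃ (α : Fin m → F) (τ : F),
        v = fun i => (α i * (((u + 1 : ℕ) : F))⁻¹ + τ) ^ (u + 1) - τ ^ (u + 1)}
      ≤ (g '' S).ncard := Set.ncard_le_ncard hsub (Set.toFinite _)
    _ ≤ S.ncard := Set.ncard_image_le (Set.toFinite _)
    _ ≤ ((q - 1) / (u + 1) + 1) ^ (m + 1) := hScard
end

section
/- Let F_q be a finite field with q elements and let u, m ∈ ℕ be such that u + 1 divides q − 1. Then there exists a Kakeya set K of degree u in F_q^m with |K| ≤ ((q − 1)/(u + 1) + 1)^{m+1}; that is, there exist a set K ⊆ F_q^m with |K| ≤ ((q − 1)/(u + 1) + 1)^{m+1} and functions g_0, g_1, …, g_{u−1} : F_q^m → F_q^m such that for every a ∈ F_q^m and every τ ∈ F_q, the point g_0(a) + g_1(a)·τ + ⋯ + g_{u−1}(a)·τ^{u−1} + a·τ^u lies in K. -/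
lemma kakeya_poly_identity {F : Type*} [CommRing F] (u : ℕ) (c τ : F) :
    (∑ j : Fin u, ((u+1).choose (j:ℕ) : F) * c ^ (u + 1 - (j:ℕ)) * τ ^ (j:ℕ))
      + (((u+1 : ℕ) : F) * c) * τ ^ u = (τ + c) ^ (u+1) - τ ^ (u+1) := by
  rw [add_pow, Finset.sum_range_succ, Finset.sum_range_succ,
    Fin.sum_univ_eq_sum_range (fun j => ((u+1).choose j : F) * c ^ (u + 1 - j) * τ ^ j) u]
  simp only [Nat.choose_self, Nat.choose_succ_self_right, Nat.sub_self,
    pow_zero, pow_one, Nat.cast_one, mul_one, one_mul]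
  have h1 : u + 1 - u = 1 := by omega
  rw [h1, pow_one]
  have hsum : ∑ k ∈ Finset.range u, τ ^ k * c ^ (u + 1 - k) * ((u+1).choose k : F)
      = ∑ j ∈ Finset.range u, ((u+1).choose j : F) * c ^ (u + 1 - j) * τ ^ j :=
    Finset.sum_congr rfl (fun k _ => by ring)
  rw [hsum]; push_cast; ring

lemma card_pow_image_le {F : Type*} [Field F] [Fintype F] [DecidableEq F] (v : ℕ)
    (hv0 : 0 < v) (hv : v ∣ Fintype.card F - 1) :
    (Finset.image (fun x : F => x ^ v) Finset.univ).card ≤ (Fintype.card F - 1) / v + 1 := by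
  classical
  obtain ⟨g, hg⟩ := IsCyclic.exists_generator (α := Fˣ)
  have hog : orderOf g = Fintype.card F - 1 := by
    rw [orderOf_eq_card_of_forall_mem_zpowers hg, Nat.card_eq_fintype_card, Fintype.card_units]
  set ζ : Fˣ := g ^ ((Fintype.card F - 1) / v) with hζ
  have hoζ : orderOf ζ = v := by
    rw [hζ, orderOf_pow, hog, Nat.gcd_eq_right (Nat.div_dvd_of_dvd hv),
      Nat.div_div_self hv]
    have : 1 < Fintype.card F := Fintype.one_lt_card
    omega
  set Sf := Finset.image (fun x : F => x ^ v) Finset.univ with hSf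
  -- each nonzero fiber has at least v elements
  have hfib : ∀ y ∈ Sf, y ≠ 0 → v ≤ (Finset.univ.filter (fun x : F => x ^ v = y)).card := by
    intro y hy hy0
    obtain ⟨x, -, rfl⟩ := Finset.mem_image.1 hy
    have hx0 : x ≠ 0 := by rintro rfl; simp [zero_pow hv0.ne'] at hy0
    have hinj : Set.InjOn (fun k : ℕ => x * ((ζ : Fˣ) ^ k : Fˣ)) (Finset.range v : Set ℕ) := by
      intro a ha b hb hab
      have : ((ζ ^ a : Fˣ) : F) = ((ζ ^ b : Fˣ) : F) := by
        have := mul_left_cancel₀ hx0 hab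
        simpa using this
      have h2 : (ζ ^ a : Fˣ) = ζ ^ b := Units.ext this
      have := pow_injOn_Iio_orderOf (x := ζ) (by simpa [hoζ] using Finset.mem_range.1 ha)
        (by simpa [hoζ] using Finset.mem_range.1 hb) h2
      exact this
    calc v = (Finset.range v).card := (Finset.card_range v).symm
      _ = ((Finset.range v).image (fun k : ℕ => x * ((ζ ^ k : Fˣ) : F))).card :=
          (Finset.card_image_of_injOn hinj).symm
      _ ≤ (Finset.univ.filter (fun z : F => z ^ v = x ^ v)).card := by
          apply Finset.card_le_card
          intro z hz
          obtain ⟨k, -, rfl⟩ := Finset.mem_image.1 hz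
          simp only [Finset.mem_filter, Finset.mem_univ, true_and]
          have : ((ζ ^ k : Fˣ) : F) ^ v = 1 := by
            have : (ζ ^ k) ^ v = 1 := by
              rw [← pow_mul, mul_comm, pow_mul, ← hoζ, pow_orderOf_eq_one, one_pow]
            calc ((ζ ^ k : Fˣ) : F) ^ v = (((ζ ^ k) ^ v : Fˣ) : F) := by push_cast; ring
              _ = 1 := by rw [this]; rfl
          rw [mul_pow, this, mul_one]
  have h0mem : (0 : F) ∈ Sf := Finset.mem_image.2 ⟨0, Finset.mem_univ _, by simp [zero_pow hv0.ne']⟩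
  have hsum : Fintype.card F = ∑ y ∈ Sf, (Finset.univ.filter (fun x : F => x ^ v = y)).card := by
    rw [← Finset.card_univ]
    exact Finset.card_eq_sum_card_image (fun x : F => x ^ v) Finset.univ
  have hsplit : ∑ y ∈ Sf, (Finset.univ.filter (fun x : F => x ^ v = y)).card
      = (Finset.univ.filter (fun x : F => x ^ v = 0)).card
        + ∑ y ∈ Sf.erase 0, (Finset.univ.filter (fun x : F => x ^ v = y)).card :=
    (Finset.add_sum_erase _ _ h0mem).symm
  have hlow : (Sf.card - 1) * v ≤ Fintype.card F - 1 := by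
    have h1 : 1 ≤ (Finset.univ.filter (fun x : F => x ^ v = 0)).card :=
      Finset.card_pos.2 ⟨0, by simp [zero_pow, hv0.ne']⟩
    have h2 : (Sf.erase 0).card * v ≤ ∑ y ∈ Sf.erase 0, (Finset.univ.filter (fun x : F => x ^ v = y)).card := by
      have := Finset.card_nsmul_le_sum (Sf.erase 0)
        (fun y => (Finset.univ.filter (fun x : F => x ^ v = y)).card) v
        (fun y hy => hfib y (Finset.mem_of_mem_erase hy) (Finset.ne_of_mem_erase hy))
      simpa [smul_eq_mul, mul_comm] using this
    have hcard : (Sf.erase 0).card = Sf.card - 1 := Finset.card_erase_of_mem h0mem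
    rw [hcard] at h2
    have hq2 : 1 < Fintype.card F := Fintype.one_lt_card
    omega
  have : Sf.card - 1 ≤ (Fintype.card F - 1) / v := (Nat.le_div_iff_mul_le hv0).2 hlow
  have hpos : 0 < Sf.card := Finset.card_pos.2 ⟨0, h0mem⟩
  omega

/-- existence of a Kakeya set of degree `u` in `F_q^m` of size at most
`((q − 1)/(u + 1) + 1)^{m+1}`: a set `K` together with functions
`g_0, …, g_{u−1} : F_q^m → F_q^m` such that for every `a ∈ F_q^m` and `τ ∈ F_q`,
`g_0(a) + g_1(a)·τ + ⋯ + g_{u−1}(a)·τ^{u−1} + a·τ^u ∈ K`. -/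
theorem exists_kakeya_set {F : Type*} [Field F] [Fintype F] (q u m : ℕ)
    (hq : Fintype.card F = q) (hdvd : u + 1 ∣ q - 1) :
    ∃ (K : Set (Fin m → F)) (g : Fin u → (Fin m → F) → Fin m → F),
      K.ncard ≤ ((q - 1) / (u + 1) + 1) ^ (m + 1) ∧
      ∀ (a : Fin m → F) (τ : F),
        (fun i => (∑ j : Fin u, g j a i * τ ^ (j : ℕ)) + a i * τ ^ u) ∈ K := by
  classical
  subst hq
  have hq2 : 1 < Fintype.card F := Fintype.one_lt_card
  have hvF : (((u + 1 : ℕ)) : F) ≠ 0 := by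
    intro h
    have hp : ringChar F ∣ u + 1 := (CharP.cast_eq_zero_iff F (ringChar F) (u + 1)).1 h
    have hq0 : ((Fintype.card F : ℕ) : F) = 0 := FiniteField.cast_card_eq_zero F
    have hpq : ringChar F ∣ Fintype.card F := (CharP.cast_eq_zero_iff F (ringChar F) _).1 hq0
    have hp1 : ringChar F ∣ Fintype.card F - 1 := hp.trans hdvd
    have hd1 : ringChar F ∣ 1 := by
      have := Nat.dvd_sub hpq hp1
      have he : Fintype.card F - (Fintype.card F - 1) = 1 := by omega
      rwa [he] at this
    have hprime : (ringChar F).Prime := CharP.char_is_prime F (ringChar F)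
    exact hprime.one_lt.ne' (Nat.dvd_one.1 hd1)
  set Sf : Finset F := Finset.image (fun x : F => x ^ (u + 1)) Finset.univ with hSfdef
  have hScard : Sf.card ≤ (Fintype.card F - 1) / (u + 1) + 1 :=
    card_pow_image_le (u + 1) (Nat.succ_pos u) hdvd
  set Kf : Finset (Fin m → F) :=
    Finset.image (fun p : (Fin m → F) × F => fun i => p.1 i - p.2)
      ((Fintype.piFinset fun _ : Fin m => Sf) ×ˢ Sf) with hKfdef
  refine ⟨↑Kf,
    fun j a i => (((u + 1).choose (j : ℕ) : ℕ) : F) *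
      (a i * (((u + 1 : ℕ)) : F)⁻¹) ^ (u + 1 - (j : ℕ)), ?_, ?_⟩
  · rw [Set.ncard_coe_finset]
    calc Kf.card ≤ ((Fintype.piFinset fun _ : Fin m => Sf) ×ˢ Sf).card := Finset.card_image_le
      _ = Sf.card ^ m * Sf.card := by
          rw [Finset.card_product, Fintype.card_piFinset]
          simp
      _ = Sf.card ^ (m + 1) := (pow_succ _ _).symm
      _ ≤ ((Fintype.card F - 1) / (u + 1) + 1) ^ (m + 1) := Nat.pow_le_pow_left hScard _
  · intro a τ
    refine Finset.mem_coe.2 (Finset.mem_image.2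
      ⟨⟨fun i => (τ + a i * (((u + 1 : ℕ)) : F)⁻¹) ^ (u + 1), τ ^ (u + 1)⟩, ?_, ?_⟩)
    · rw [Finset.mem_product]
      exact ⟨Fintype.mem_piFinset.2 fun i => Finset.mem_image_of_mem _ (Finset.mem_univ _),
        Finset.mem_image_of_mem _ (Finset.mem_univ _)⟩
    · funext i
      have hc : (((u + 1 : ℕ)) : F) * (a i * (((u + 1 : ℕ)) : F)⁻¹) = a i := by
        rw [mul_comm (a i), ← mul_assoc, mul_inv_cancel₀ hvF, one_mul]
      have hid := kakeya_poly_identity (F := F) u (a i * (((u + 1 : ℕ)) : F)⁻¹) τ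
      rw [hc] at hid
      simpa using hid.symm
end

section
/- Let R be a commutative ring, let u ≥ 1 and m ≥ 1 be integers, let f be an m-variate polynomial over R that is homogeneous of degree D, and let g_0, g_1, …, g_{u−1}, a ∈ R^m. For j ∈ [m], define the univariate polynomial P_j(y) := Σ_{i=0}^{u−1} (g_i)_j · y^i + a_j · y^u ∈ R[y], and let h(y) := f(P_1(y), …, P_m(y)). Then deg(h) ≤ D·u and the coefficient of y^{D·u} in h(y) equals f(a). -/
open Polynomial

lemma coeff_prod_pow_of_natDegree_le {R : Type*} [CommRing R] {ι : Type*}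
    (s : Finset ι) (P : ι → R[X]) (d : ι → ℕ) (u : ℕ)
    (hP : ∀ j, (P j).natDegree ≤ u) :
    (∏ j ∈ s, P j ^ d j).coeff ((∑ j ∈ s, d j) * u) = ∏ j ∈ s, (P j).coeff u ^ d j := by
  classical
  induction s using Finset.induction_on with
  | empty => simp
  | insert j s hj ih =>
    rw [Finset.prod_insert hj, Finset.sum_insert hj, Finset.prod_insert hj, add_mul,
      Polynomial.coeff_mul_add_eq_of_natDegree_le
        (Polynomial.natDegree_pow_le.trans (Nat.mul_le_mul_left _ (hP j)))
        ((Polynomial.natDegree_prod_le _ _).trans ?_),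
      Polynomial.coeff_pow_of_natDegree_le (hP j), ih]
    calc ∑ i ∈ s, (P i ^ d i).natDegree ≤ ∑ i ∈ s, d i * u :=
          Finset.sum_le_sum fun i _ =>
            Polynomial.natDegree_pow_le.trans (Nat.mul_le_mul_left _ (hP i))
      _ = (∑ i ∈ s, d i) * u := (Finset.sum_mul _ _ _).symm

/-- if `f` is homogeneous of degree `D` and
`P_j(y) = Σ_{i=0}^{u−1} (g_i)_j·y^i + a_j·y^u`, then `h(y) = f(P_1(y), …, P_m(y))`
has degree at most `D·u` and its coefficient of `y^{D·u}` equals `f(a)`. -/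
theorem homogeneous_restriction_leading_coeff {R : Type*} [CommRing R] (m u D : ℕ)
    (hu : 1 ≤ u) (hm : 1 ≤ m)
    (f : MvPolynomial (Fin m) R) (hf : f.IsHomogeneous D)
    (g : Fin u → Fin m → R) (a : Fin m → R) :
    (MvPolynomial.aeval (fun j : Fin m =>
        (∑ i : Fin u, Polynomial.C (g i j) * Polynomial.X ^ (i : ℕ)) +
          Polynomial.C (a j) * Polynomial.X ^ u) f : Polynomial R).degree
        ≤ ((D * u : ℕ) : WithBot ℕ) ∧
    (MvPolynomial.aeval (fun j : Fin m =>
        (∑ i : Fin u, Polynomial.C (g i j) * Polynomial.X ^ (i : ℕ)) +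
          Polynomial.C (a j) * Polynomial.X ^ u) f : Polynomial R).coeff (D * u)
      = MvPolynomial.eval a f := by
  classical
  set P : Fin m → R[X] := fun j =>
    (∑ i : Fin u, Polynomial.C (g i j) * Polynomial.X ^ (i : ℕ)) +
      Polynomial.C (a j) * Polynomial.X ^ u with hP
  have hdeg : ∀ j, (P j).natDegree ≤ u := by
    intro j
    refine (Polynomial.natDegree_add_le _ _).trans (max_le ?_ ?_)
    · refine (Polynomial.natDegree_sum_le _ _).trans ?_
      exact Finset.sup_le fun i _ =>
        (Polynomial.natDegree_C_mul_X_pow_le _ _).trans i.2.le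
    · exact Polynomial.natDegree_C_mul_X_pow_le _ _
  have hcoeff : ∀ j, (P j).coeff u = a j := by
    intro j
    rw [hP]
    simp only [Polynomial.coeff_add, Polynomial.finset_sum_coeff, Polynomial.coeff_C_mul,
      Polynomial.coeff_X_pow]
    rw [Finset.sum_eq_zero fun i _ => by
      rw [if_neg (Nat.ne_of_lt i.2).symm, mul_zero], zero_add]
    simp
  have hsum : ∀ d ∈ f.support, ∑ j : Fin m, d j = D := by
    intro d hd
    have := hf (MvPolynomial.mem_support_iff.mp hd)
    rw [← this]
    simp [Finsupp.weight_apply, Finsupp.sum_fintype]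
  have key : (MvPolynomial.aeval P f : R[X]) =
      ∑ d ∈ f.support, Polynomial.C (f.coeff d) * ∏ j : Fin m, P j ^ d j := by
    rw [MvPolynomial.aeval_def, MvPolynomial.eval₂_eq']
    rfl
  constructor
  · rw [key]
    refine (Polynomial.degree_sum_le _ _).trans ?_
    refine Finset.sup_le fun d hd => ?_
    refine (Polynomial.degree_mul_le _ _).trans ?_
    have h1 : (Polynomial.C (f.coeff d)).degree ≤ 0 := Polynomial.degree_C_le
    have h2 : (∏ j : Fin m, P j ^ d j).degree ≤ ((D * u : ℕ) : WithBot ℕ) := by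
      have hnd : (∏ j : Fin m, P j ^ d j).natDegree ≤ D * u := by
        refine (Polynomial.natDegree_prod_le _ _).trans ?_
        calc ∑ j : Fin m, (P j ^ d j).natDegree ≤ ∑ j : Fin m, d j * u :=
              Finset.sum_le_sum fun j _ =>
                Polynomial.natDegree_pow_le.trans (Nat.mul_le_mul_left _ (hdeg j))
          _ = (∑ j : Fin m, d j) * u := (Finset.sum_mul _ _ _).symm
          _ = D * u := by rw [hsum d hd]
      exact Polynomial.natDegree_le_iff_degree_le.mp hnd
    calc (Polynomial.C (f.coeff d)).degree + (∏ j : Fin m, P j ^ d j).degree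
        ≤ 0 + ((D * u : ℕ) : WithBot ℕ) := add_le_add h1 h2
      _ = ((D * u : ℕ) : WithBot ℕ) := zero_add _
  · rw [key, Polynomial.finset_sum_coeff, MvPolynomial.eval_eq']
    refine Finset.sum_congr rfl fun d hd => ?_
    rw [Polynomial.coeff_C_mul, ← hsum d hd,
      coeff_prod_pow_of_natDegree_le _ _ _ _ hdeg]
    congr 1
    exact Finset.prod_congr rfl fun j _ => by rw [hcoeff j]
end

section
/- Let F be a field, let f be an m-variate polynomial over F of total degree at most d, let g_1(t), …, g_m(t) ∈ F[t], and let h(t) := f(g_1(t), …, g_m(t)). For each i ∈ [m], let g̃_i(t, Z) ∈ F[t, Z] be the unique polynomial such that g_i(t + Z) = g_i(t) + Z·g̃_i(t, Z), and for e = (e_1,…,e_m) ∈ ℕ^m set g̃_e := ∏_{i=1}^m g̃_i^{e_i}. For ℓ ∈ ℕ, define h_ℓ(t, Z) := Σ_{i=0}^{ℓ} Z^i · Σ_{e ∈ ℕ^m : |e|_1 = i} ∂̄_e(f)(g_1(t),…,g_m(t)) · g̃_e(t, Z). Then for every k ∈ ℕ with k ≤ ℓ, the k-th Hasse derivative h^{(k)}(t)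 of h equals the coefficient of Z^k in h_ℓ(t, Z) (viewed as a polynomial in t). -/
open Polynomial in
/-- hasseDeriv k p equals coeff k of p(t+Z). -/
theorem aux_hasse_coeff {F : Type*} [CommRing F] (k : ℕ) (p : Polynomial F) :
    (Polynomial.eval₂ (Polynomial.C.comp Polynomial.C)
      (Polynomial.C Polynomial.X + Polynomial.X) p : Polynomial (Polynomial F)).coeff k
      = Polynomial.hasseDeriv k p := by
  have h1 : (Polynomial.eval₂ (Polynomial.C.comp Polynomial.C)
      (Polynomial.C Polynomial.X + Polynomial.X) p : Polynomial (Polynomial F))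
      = Polynomial.taylor Polynomial.X (p.map Polynomial.C) := by
    rw [taylor_apply, Polynomial.comp, eval₂_map, add_comm (C X : (Polynomial F)[X]) X]
  rw [h1, taylor_coeff]
  have h2 : hasseDeriv k (p.map (C : F →+* Polynomial F)) = (hasseDeriv k p).map C := by
    ext n
    simp [hasseDeriv_coeff, coeff_map]
  rw [h2, eval_map, eval₂_C_X]

theorem aux_sum_eq_sum {β γ : Type*} [AddCommMonoid γ] [DecidableEq β] (s t : Finset β)
    (G : β → γ) (h1 : ∀ e ∈ s, e ∉ t → G e = 0) (h2 : ∀ e ∈ t, e ∉ s → G e = 0) :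
    ∑ e ∈ s, G e = ∑ e ∈ t, G e := by
  have a : ∑ e ∈ s ∩ t, G e = ∑ e ∈ s, G e :=
    Finset.sum_subset Finset.inter_subset_left
      (fun e he hen => h1 e he (fun ht => hen (Finset.mem_inter.mpr ⟨he, ht⟩)))
  have b : ∑ e ∈ s ∩ t, G e = ∑ e ∈ t, G e :=
    Finset.sum_subset Finset.inter_subset_right
      (fun e he hen => h2 e he (fun hs => hen (Finset.mem_inter.mpr ⟨hs, he⟩)))
  exact a.symm.trans b

/-- explicit chain rule for Hasse derivatives of the restriction of a
multivariate polynomial to a curve. Here `F[t][Z]` is `Polynomial (Polynomial F)`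
(the outer variable is `Z`, the inner one is `t`), `g̃_i` is characterized by
`g_i(t + Z) = g_i(t) + Z·g̃_i(t, Z)`, `h(t) = f(g_1(t), …, g_m(t))` and
`h_ℓ(t,Z) = Σ_{i=0}^{ℓ} Z^i Σ_{|e|₁ = i} ∂̄_e(f)(g(t))·g̃_e(t,Z)`.
For `k ≤ ℓ`, the `k`-th Hasse derivative of `h` equals the coefficient of `Z^k` in `h_ℓ`. -/
theorem hasseDeriv_comp_eq_coeff {F : Type*} [Field F] {m d : ℕ}
    (f : MvPolynomial (Fin m) F) (hf : f.totalDegree ≤ d)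
    (g : Fin m → Polynomial F)
    (gt : Fin m → Polynomial (Polynomial F))
    (hgt : ∀ i, Polynomial.eval₂ (Polynomial.C.comp Polynomial.C)
        (Polynomial.C Polynomial.X + Polynomial.X) (g i)
      = Polynomial.C (g i) + Polynomial.X * gt i)
    (ℓ k : ℕ) (hk : k ≤ ℓ) :
    Polynomial.hasseDeriv k (MvPolynomial.aeval g f) =
      (∑ i ∈ Finset.range (ℓ + 1), Polynomial.X ^ i *
        ∑ e ∈ (Fintype.piFinset fun _ : Fin m => Finset.range (i + 1)).filter
            (fun e : Fin m → ℕ => ∑ j, e j = i),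
          Polynomial.C (MvPolynomial.aeval g
              (mvHasseDeriv (Finsupp.equivFunOnFinite.symm e) f)) *
            ∏ j, gt j ^ e j).coeff k := by
  classical
  set F2 : MvPolynomial (Fin m) (MvPolynomial (Fin m) F) :=
    MvPolynomial.aeval
      (fun i => MvPolynomial.C (MvPolynomial.X i) + MvPolynomial.X i) f with hF2
  -- the term associated to a multi-index
  set term : (Fin m →₀ ℕ) → Polynomial (Polynomial F) := fun e =>
    Polynomial.X ^ (∑ j, e j) *
      (Polynomial.C (MvPolynomial.aeval g (mvHasseDeriv e f)) * ∏ j, gt j ^ e j) with hterm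
  -- step 1: LHS = coeff k of f(g(t)+Z·g̃)
  have step1 : Polynomial.hasseDeriv k (MvPolynomial.aeval g f) =
      (MvPolynomial.aeval (fun i => Polynomial.C (g i) + Polynomial.X * gt i) f :
        Polynomial (Polynomial F)).coeff k := by
    have hCC : (Polynomial.C.comp Polynomial.C : F →+* Polynomial (Polynomial F))
        = algebraMap F _ := by
      ext a; simp [Polynomial.algebraMap_apply]
    have hΦ : ∀ p : Polynomial F,
        Polynomial.eval₂ (Polynomial.C.comp Polynomial.C)
          (Polynomial.C Polynomial.X + Polynomial.X) p
        = Polynomial.aeval (Polynomial.C Polynomial.X + Polynomial.X) p := by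
      intro p; rw [Polynomial.aeval_def, hCC]
    rw [← aux_hasse_coeff, hΦ]
    congr 1
    have h3 := MvPolynomial.comp_aeval_apply (f := g)
      (φ := (Polynomial.aeval (Polynomial.C Polynomial.X + Polynomial.X) :
        Polynomial F →ₐ[F] Polynomial (Polynomial F))) (p := f)
    rw [h3]
    have h4 : (fun i => Polynomial.aeval (Polynomial.C Polynomial.X + Polynomial.X) (g i))
        = fun i => Polynomial.C (g i) + Polynomial.X * gt i := by
      funext i; rw [← hΦ, hgt]
    rw [h4]
  -- step 2: expansion via mv Hasse derivatives
  have step2 : (MvPolynomial.aeval (fun i => Polynomial.C (g i) + Polynomial.X * gt i) f :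
        Polynomial (Polynomial F)) = ∑ e ∈ F2.support, term e := by
    set ψ0 : MvPolynomial (Fin m) F →+* Polynomial (Polynomial F) :=
      Polynomial.C.comp (MvPolynomial.aeval g).toRingHom with hψ0
    set Ψ : MvPolynomial (Fin m) (MvPolynomial (Fin m) F) →+* Polynomial (Polynomial F) :=
      MvPolynomial.eval₂Hom ψ0 (fun i => Polynomial.X * gt i) with hΨ
    have step2a : ∀ q : MvPolynomial (Fin m) F, (MvPolynomial.aeval
        (fun i => Polynomial.C (g i) + Polynomial.X * gt i) q :
        Polynomial (Polynomial F)) = Ψ (MvPolynomial.aeval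
        (fun i => MvPolynomial.C (MvPolynomial.X i) + MvPolynomial.X i) q) := by
      intro q
      induction q using MvPolynomial.induction_on with
      | C a =>
        simp only [MvPolynomial.aeval_C, MvPolynomial.algebraMap_apply, hΨ,
          MvPolynomial.eval₂Hom_C, hψ0, RingHom.coe_comp, Function.comp_apply,
          AlgHom.toRingHom_eq_coe, RingHom.coe_coe, Polynomial.algebraMap_apply,
          MvPolynomial.algebraMap_eq]
      | add p q hp hq => rw [map_add, map_add, map_add, hp, hq]
      | mul_X p i hp =>
        simp only [map_mul, map_add, MvPolynomial.aeval_X, hp, hΨ,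
          MvPolynomial.eval₂Hom_C, MvPolynomial.eval₂Hom_X', hψ0, RingHom.coe_comp,
          Function.comp_apply, AlgHom.toRingHom_eq_coe, RingHom.coe_coe]
    rw [step2a f, ← hF2]
    conv_lhs => rw [F2.as_sum]
    rw [map_sum]
    refine Finset.sum_congr rfl fun e he => ?_
    have hcoeff : MvPolynomial.coeff e F2 = mvHasseDeriv e f := rfl
    rw [hΨ, MvPolynomial.eval₂Hom_monomial, hcoeff, Finsupp.prod_pow]
    simp only [hψ0, RingHom.coe_comp, Function.comp_apply, AlgHom.toRingHom_eq_coe,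
      RingHom.coe_coe, mul_pow, Finset.prod_mul_distrib,
      Finset.prod_pow_eq_pow_sum, hterm]
    ring
  -- step 3: bookkeeping
  rw [step1, step2]
  simp only [Polynomial.finset_sum_coeff]
  have hle : ∀ (e : Fin m → ℕ) (j : Fin m), e j ≤ ∑ j', e j' := fun e j =>
    Finset.single_le_sum (fun _ _ => Nat.zero_le _) (Finset.mem_univ j)
  have hR : ∀ i ∈ Finset.range (ℓ + 1),
      (Polynomial.X ^ i * ∑ e ∈ (Fintype.piFinset fun _ : Fin m => Finset.range (i + 1)).filter
            (fun e : Fin m → ℕ => ∑ j, e j = i),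
          Polynomial.C (MvPolynomial.aeval g
              (mvHasseDeriv (Finsupp.equivFunOnFinite.symm e) f)) *
            ∏ j, gt j ^ e j).coeff k
      = ∑ e ∈ (Fintype.piFinset fun _ : Fin m => Finset.range (i + 1)).filter
            (fun e : Fin m → ℕ => ∑ j, e j = i),
          (term (Finsupp.equivFunOnFinite.symm e)).coeff k := by
    intro i _
    rw [Finset.mul_sum, Polynomial.finset_sum_coeff]
    refine Finset.sum_congr rfl fun e he => ?_
    refine congrArg (fun p => Polynomial.coeff p k) ?_
    rw [hterm]
    simp only [Finsupp.coe_equivFunOnFinite_symm]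
    rw [(Finset.mem_filter.mp he).2]
  rw [Finset.sum_congr rfl hR]
  set Gk : (Fin m → ℕ) → Polynomial F :=
    fun e => (term (Finsupp.equivFunOnFinite.symm e)).coeff k with hGk
  set A : Finset (Fin m → ℕ) := F2.support.image (⇑Finsupp.equivFunOnFinite) with hA
  set B : Finset (Fin m → ℕ) := (Fintype.piFinset fun _ : Fin m => Finset.range (ℓ + 1)).filter
      (fun e : Fin m → ℕ => ∑ j, e j ≤ ℓ) with hB
  have hLHS : ∑ e ∈ F2.support, (term e).coeff k = ∑ e ∈ A, Gk e := by
    rw [hA, Finset.sum_image (fun a _ b _ h => Finsupp.equivFunOnFinite.injective h)]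
    refine Finset.sum_congr rfl fun e _ => ?_
    rw [hGk]
    simp
  have hBS : ∀ i ∈ Finset.range (ℓ + 1),
      B.filter (fun e => ∑ j, e j = i)
      = (Fintype.piFinset fun _ : Fin m => Finset.range (i + 1)).filter
          (fun e : Fin m → ℕ => ∑ j, e j = i) := by
    intro i hi
    rw [Finset.mem_range, Nat.lt_succ_iff] at hi
    ext e
    simp only [hB, Finset.mem_filter, Fintype.mem_piFinset, Finset.mem_range, Nat.lt_succ_iff,
      Finset.filter_filter]
    constructor
    · rintro ⟨h1, h2, h3⟩
      exact ⟨fun j => h3 ▸ hle e j, h3⟩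
    · rintro ⟨hbound, hsum⟩
      exact ⟨fun j => (hbound j).trans hi, hsum.le.trans hi, hsum⟩
  have hRHS : ∑ i ∈ Finset.range (ℓ + 1),
      ∑ e ∈ (Fintype.piFinset fun _ : Fin m => Finset.range (i + 1)).filter
          (fun e : Fin m → ℕ => ∑ j, e j = i), Gk e = ∑ e ∈ B, Gk e := by
    rw [← Finset.sum_fiberwise_of_maps_to (g := fun e : Fin m → ℕ => ∑ j, e j)
        (t := Finset.range (ℓ + 1))
        (fun e he => Finset.mem_range.mpr (Nat.lt_succ_of_le (Finset.mem_filter.mp he).2)) Gk]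
    exact Finset.sum_congr rfl fun i hi => by rw [hBS i hi]
  rw [hLHS, hRHS]
  refine aux_sum_eq_sum A B Gk ?_ ?_
  · intro e heA heB
    have hks : k < ∑ j, e j := by
      by_contra hcon
      push_neg at hcon
      exact heB (Finset.mem_filter.mpr ⟨Fintype.mem_piFinset.mpr fun j =>
        Finset.mem_range.mpr (Nat.lt_succ_of_le ((hle e j).trans (hcon.trans hk))),
        hcon.trans hk⟩)
    rw [hGk, hterm]
    simp only [Finsupp.coe_equivFunOnFinite_symm]
    rw [Polynomial.coeff_X_pow_mul', if_neg (not_le.mpr hks)]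
  · intro e heB heA
    have hns : Finsupp.equivFunOnFinite.symm e ∉ F2.support := by
      intro hmem
      exact heA (hA ▸ Finset.mem_image.mpr ⟨_, hmem, Finsupp.equivFunOnFinite.apply_symm_apply e⟩)
    have hzero : mvHasseDeriv (Finsupp.equivFunOnFinite.symm e) f = 0 :=
      MvPolynomial.notMem_support_iff.mp hns
    simp only [hGk, hterm]
    rw [hzero]
    simp
end

section
/- For every real constant c ≥ 1 there exist a constant c′ ≥ 1 and a natural number d₀ such that the following holds for all integers d ≥ d₀ and r ≥ 2: if the real sequence (r_i) is defined by r_0 = r and r_i = c·d·log₂(r_{i−1}) for i ≥ 1, then r_k ≤ c′·λ_k(d)·log₂^{∘k}(r) for all integers k with 0 ≤ k < log*(r). -/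
/-- `log*(x)`: the smallest nonnegative integer `c` such that the `c`-fold iterate of
`log₂` applied to `x` is at most `1`. -/
noncomputable def logStar (x : ℝ) : ℕ := sInf {c : ℕ | (Real.logb 2)^[c] x ≤ 1}

/-- `λ_k(x) = ∏_{i=0}^{min{k, log*(x) − 1}} log₂^{∘i}(x)`. -/
noncomputable def lam (k : ℕ) (x : ℝ) : ℝ :=
  ∏ i ∈ Finset.range (min k (logStar x - 1) + 1), (Real.logb 2)^[i] x

open Real Finset

/-- `8·log₂ y ≤ 7·y` for `y ≥ 0`. -/
private lemma aux_logb_le (y : ℝ) (hy : 0 ≤ y) : 8 * Real.logb 2 y ≤ 7 * y := by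
  rcases le_or_gt y 1 with h | h
  · have := Real.logb_nonpos (by norm_num : (1:ℝ) < 2) hy h
    linarith
  · have hy0 : (0:ℝ) < y := by linarith
    have hs : Real.log (Real.sqrt y) ≤ Real.sqrt y - 1 :=
      Real.log_le_sub_one_of_pos (Real.sqrt_pos.2 hy0)
    have hsq : Real.sqrt y ^ 2 = y := Real.sq_sqrt hy
    have hs1 : 1 ≤ Real.sqrt y := Real.one_le_sqrt.2 h.le
    have hlog : Real.log y = 2 * Real.log (Real.sqrt y) := by
      have := Real.log_sqrt hy
      linarith
    have hl2 : (0.6931471803:ℝ) < Real.log 2 := Real.log_two_gt_d9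
    have h2 : (0:ℝ) < Real.log 2 := by linarith
    rw [Real.logb, show 8 * (Real.log y / Real.log 2) = 8 * Real.log y / Real.log 2 from by ring,
      div_le_iff₀ h2]
    nlinarith [sq_nonneg (Real.sqrt y - 1.65), sq_nonneg (Real.sqrt y - 1)]

/-- sum of iterated logs bounded by `8·y`. -/
private lemma aux_sum_iter (m : ℕ) : ∀ y : ℝ, 0 ≤ y →
    (∀ i < m, 1 < (Real.logb 2)^[i] y) →
    ∑ i ∈ Finset.range (m + 1), (Real.logb 2)^[i] y ≤ 8 * y := by
  induction m with
  | zero => intro y hy _; simp; linarith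
  | succ m ih =>
    intro y hy hlt
    have h1 : 1 < y := by simpa using hlt 0 (Nat.succ_pos m)
    have hy' : 0 ≤ Real.logb 2 y := Real.logb_nonneg (by norm_num) h1.le
    have hsum : ∑ i ∈ Finset.range (m + 2), (Real.logb 2)^[i] y
        = y + ∑ i ∈ Finset.range (m + 1), (Real.logb 2)^[i] (Real.logb 2 y) := by
      rw [Finset.sum_range_succ' (fun i => (Real.logb 2)^[i] y) (m+1)]
      simp [Function.iterate_succ_apply, add_comm]
    have hih := ih (Real.logb 2 y) hy' (by
      intro i hi
      have := hlt (i+1) (by omega)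
      simpa [Function.iterate_succ_apply] using this)
    have hb := aux_logb_le y hy
    rw [hsum]; linarith

/-- the defining set of `logStar` is nonempty. -/
private lemma aux_exists_iter (x : ℝ) : ∃ n : ℕ, (Real.logb 2)^[n] x ≤ 1 := by
  obtain ⟨N, hN⟩ := pow_unbounded_of_one_lt x (by norm_num : (1:ℝ) < 2)
  have key : ∀ N : ℕ, ∀ x : ℝ, x ≤ 2 ^ N → ∃ n : ℕ, (Real.logb 2)^[n] x ≤ 1 := by
    intro N
    induction N with
    | zero => intro x hx; exact ⟨0, by simpa using hx⟩
    | succ N ih =>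
      intro x hx
      rcases le_or_gt x 1 with h | h
      · exact ⟨0, by simpa using h⟩
      · have hlog : Real.logb 2 x ≤ 2 ^ N := by
          have h1 : Real.logb 2 x ≤ Real.logb 2 (2 ^ (N+1)) :=
            Real.logb_le_logb_of_le (by norm_num) (by linarith) hx
          have h2 : Real.logb 2 ((2:ℝ) ^ (N+1)) = (N+1 : ℕ) := by
            rw [Real.logb_pow, Real.logb_self_eq_one (by norm_num : (1:ℝ) < 2)]
            simp
          have h3 : ((N+1 : ℕ) : ℝ) ≤ (2:ℝ) ^ N := by
            exact_mod_cast Nat.lt_two_pow_self (n := N)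
          calc Real.logb 2 x ≤ _ := h1
            _ = _ := h2
            _ ≤ _ := h3
        obtain ⟨n, hn⟩ := ih (Real.logb 2 x) hlog
        exact ⟨n + 1, by simpa [Function.iterate_succ_apply] using hn⟩
  exact key N x hN.le

/-- iterates before `logStar` exceed 1. -/
private lemma aux_lt_iter {x : ℝ} {k : ℕ} (hk : k < logStar x) : 1 < (Real.logb 2)^[k] x := by
  have := Nat.notMem_of_lt_sInf (s := {c : ℕ | (Real.logb 2)^[c] x ≤ 1}) hk
  simpa [Set.mem_setOf_eq] using this

private lemma aux_logStar_ge_two {x : ℝ} (hx : 3 ≤ x) : 2 ≤ logStar x := by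
  apply le_csInf (aux_exists_iter x)
  intro n hn
  have hn' : (Real.logb 2)^[n] x ≤ 1 := hn
  by_contra hlt
  push_neg at hlt
  interval_cases n
  · simp only [Function.iterate_zero, id_eq] at hn'; linarith
  · simp only [Function.iterate_one] at hn' 
    have : (1:ℝ) < Real.logb 2 x := by
      calc (1:ℝ) = Real.logb 2 2 := (Real.logb_self_eq_one (by norm_num : (1:ℝ) < 2)).symm
        _ < Real.logb 2 x := Real.logb_lt_logb (by norm_num) (by norm_num) (by linarith)
    linarith


set_option maxHeartbeats 1000000 in
/-- for every `c ≥ 1` there are `c' ≥ 1` and `d₀` such that for all integers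
`d ≥ d₀` and `r ≥ 2`, the sequence `r_0 = r`, `r_i = c·d·log₂(r_{i−1})` satisfies
`r_k ≤ c'·λ_k(d)·log₂^{∘k}(r)` for all `0 ≤ k < log*(r)`. -/
theorem iterated_log_sequence_bound (c : ℝ) (hc : 1 ≤ c) :
    ∃ (c' : ℝ) (d₀ : ℕ), 1 ≤ c' ∧
      ∀ (d r : ℕ), d₀ ≤ d → 2 ≤ r →
        ∀ rr : ℕ → ℝ, rr 0 = (r : ℝ) →
          (∀ i : ℕ, rr (i + 1) = c * (d : ℝ) * Real.logb 2 (rr i)) →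
          ∀ k : ℕ, k < logStar (r : ℝ) →
            rr k ≤ c' * lam k (d : ℝ) * (Real.logb 2)^[k] (r : ℝ) := by
  refine ⟨16 * c + 16, ⌈(2:ℝ) ^ (2 * c + 3)⌉₊, by linarith, ?_⟩
  intro d r hd hr rr h0 hrec
  set c' : ℝ := 16 * c + 16 with hc'
  have hc'1 : (1:ℝ) ≤ c' := by rw [hc']; linarith
  -- basic facts about d
  have hdge : (2:ℝ) ^ (2 * c + 3) ≤ (d : ℝ) := by
    calc (2:ℝ) ^ (2*c+3) ≤ (⌈(2:ℝ) ^ (2 * c + 3)⌉₊ : ℝ) := Nat.le_ceil _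
      _ ≤ (d : ℝ) := by exact_mod_cast hd
  have h32 : (32:ℝ) ≤ (d:ℝ) := by
    have : (2:ℝ) ^ (5:ℝ) ≤ (2:ℝ) ^ (2*c+3) :=
      Real.rpow_le_rpow_of_exponent_le (by norm_num) (by linarith)
    have h5 : (2:ℝ) ^ (5:ℝ) = 32 := by
      rw [show (5:ℝ) = ((5:ℕ):ℝ) by norm_num, Real.rpow_natCast]; norm_num
    linarith
  have hlogd : 2 * c + 3 ≤ Real.logb 2 (d:ℝ) := by
    calc 2*c+3 = Real.logb 2 ((2:ℝ) ^ (2*c+3)) :=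
          (Real.logb_rpow (by norm_num) (by norm_num)).symm
      _ ≤ Real.logb 2 (d:ℝ) := Real.logb_le_logb_of_le (by norm_num)
          (Real.rpow_pos_of_pos (by norm_num) _) hdge
  have hlogd_pos : (1:ℝ) < Real.logb 2 (d:ℝ) := by linarith
  have hLd : 2 ≤ logStar (d:ℝ) := aux_logStar_ge_two (by linarith)
  -- lam facts
  have hfac : ∀ i ∈ Finset.range (logStar (d:ℝ)), 1 < (Real.logb 2)^[i] (d:ℝ) := by
    intro i hi
    exact aux_lt_iter (Finset.mem_range.1 hi)
  have hlam_fac : ∀ k : ℕ, ∀ i ∈ Finset.range (min k (logStar (d:ℝ) - 1) + 1),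
      1 < (Real.logb 2)^[i] (d:ℝ) := by
    intro k i hi
    apply aux_lt_iter
    have := Finset.mem_range.1 hi
    omega
  have hlam_one : ∀ k : ℕ, 1 ≤ lam k (d:ℝ) := by
    intro k
    unfold lam
    calc (1:ℝ) = ∏ i ∈ Finset.range (min k (logStar (d:ℝ) - 1) + 1), 1 := by simp
      _ ≤ _ := Finset.prod_le_prod (by intros; norm_num)
          (fun i hi => (hlam_fac k i hi).le)
  -- lam lower bound for k ≥ 1
  have hlam_lb : ∀ k : ℕ, (d:ℝ) * Real.logb 2 (d:ℝ) ≤ lam (k+1) (d:ℝ) := by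
    intro k
    unfold lam
    set M : ℕ := min (k+1) (logStar (d:ℝ) - 1) with hM
    have hM2 : 2 ≤ M + 1 := by omega
    have hsplit : (∏ i ∈ Finset.Ico 0 2, (Real.logb 2)^[i] (d:ℝ)) *
        ∏ i ∈ Finset.Ico 2 (M+1), (Real.logb 2)^[i] (d:ℝ)
        = ∏ i ∈ Finset.Ico 0 (M+1), (Real.logb 2)^[i] (d:ℝ) :=
      Finset.prod_Ico_consecutive _ (by omega) hM2
    have h2 : (∏ i ∈ Finset.Ico 0 2, (Real.logb 2)^[i] (d:ℝ)) = (d:ℝ) * Real.logb 2 (d:ℝ) := by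
      rw [← Finset.range_eq_Ico, Finset.prod_range_succ, Finset.prod_range_one]
      simp
    have hone : (1:ℝ) ≤ ∏ i ∈ Finset.Ico 2 (M+1), (Real.logb 2)^[i] (d:ℝ) := by
      calc (1:ℝ) = ∏ _i ∈ Finset.Ico 2 (M+1), (1:ℝ) := by simp
        _ ≤ _ := Finset.prod_le_prod (by intros; norm_num) (by
            intro i hi
            have hi' := Finset.mem_Ico.1 hi
            exact (aux_lt_iter (x := (d:ℝ)) (by omega)).le)
    have hnn : (0:ℝ) ≤ (d:ℝ) * Real.logb 2 (d:ℝ) := by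
      have : (0:ℝ) ≤ Real.logb 2 (d:ℝ) := by linarith
      positivity
    calc (d:ℝ) * Real.logb 2 (d:ℝ)
        ≤ ((d:ℝ) * Real.logb 2 (d:ℝ)) *
            ∏ i ∈ Finset.Ico 2 (M+1), (Real.logb 2)^[i] (d:ℝ) :=
          le_mul_of_one_le_right hnn hone
      _ = ∏ i ∈ Finset.range (M+1), (Real.logb 2)^[i] (d:ℝ) := by
          rw [← h2, hsplit, Finset.range_eq_Ico]
  -- log of lam is small
  have hlam_log : ∀ k : ℕ, Real.logb 2 (lam k (d:ℝ)) ≤ 8 * Real.logb 2 (d:ℝ) := by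
    intro k
    have hpos : ∀ i ∈ Finset.range (min k (logStar (d:ℝ) - 1) + 1),
        (Real.logb 2)^[i] (d:ℝ) ≠ 0 := fun i hi => by
      have := hlam_fac k i hi; positivity
    have hlogprod : Real.logb 2 (lam k (d:ℝ)) =
        ∑ i ∈ Finset.range (min k (logStar (d:ℝ) - 1) + 1),
          (Real.logb 2)^[i+1] (d:ℝ) := by
      unfold lam
      rw [Real.logb, Real.log_prod hpos, Finset.sum_div]
      exact Finset.sum_congr rfl (fun i _ => by
        rw [Function.iterate_succ_apply', Real.logb])
    rw [hlogprod]
    have hsub : Finset.range (min k (logStar (d:ℝ) - 1) + 1) ⊆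
        Finset.range (logStar (d:ℝ)) := Finset.range_subset_range.2 (by omega)
    have hstep : ∑ i ∈ Finset.range (min k (logStar (d:ℝ) - 1) + 1),
          (Real.logb 2)^[i+1] (d:ℝ)
        ≤ ∑ i ∈ Finset.range (logStar (d:ℝ)), (Real.logb 2)^[i+1] (d:ℝ) := by
      apply Finset.sum_le_sum_of_subset_of_nonneg hsub
      intro i hi _
      have hi' : i + 1 ≤ logStar (d:ℝ) := Finset.mem_range.1 hi
      rcases lt_or_eq_of_le hi' with h | h
      · exact le_of_lt (lt_trans one_pos (aux_lt_iter h))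
      · have hprev : 1 < (Real.logb 2)^[i] (d:ℝ) := aux_lt_iter (by omega)
        rw [Function.iterate_succ_apply']
        exact (Real.logb_nonneg (by norm_num) hprev.le)
    have hshift : ∑ i ∈ Finset.range (logStar (d:ℝ)), (Real.logb 2)^[i+1] (d:ℝ)
        = ∑ i ∈ Finset.range ((logStar (d:ℝ) - 1) + 1),
            (Real.logb 2)^[i] (Real.logb 2 (d:ℝ)) := by
      have : logStar (d:ℝ) = (logStar (d:ℝ) - 1) + 1 := by omega
      rw [this]
      exact Finset.sum_congr rfl (fun i _ => by rw [Function.iterate_succ_apply])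
    have hA := aux_sum_iter (logStar (d:ℝ) - 1) (Real.logb 2 (d:ℝ))
      (by linarith) (by
        intro i hi
        have : 1 < (Real.logb 2)^[i+1] (d:ℝ) := aux_lt_iter (by omega)
        simpa [Function.iterate_succ_apply] using this)
    linarith [hstep, hshift ▸ hA, le_of_eq hshift]
  -- lower bound on rr
  have hrr_lb : ∀ k : ℕ, k < logStar (r:ℝ) → (Real.logb 2)^[k] (r:ℝ) ≤ rr k := by
    intro k
    induction k with
    | zero => intro _; simp [h0]
    | succ k ih =>
      intro hk
      have hk' : k < logStar (r:ℝ) := by omega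
      have hLk : 1 < (Real.logb 2)^[k] (r:ℝ) := aux_lt_iter hk'
      have hrk : 1 < rr k := lt_of_lt_of_le hLk (ih hk')
      rw [hrec k, Function.iterate_succ_apply']
      have h1 : Real.logb 2 ((Real.logb 2)^[k] (r:ℝ)) ≤ Real.logb 2 (rr k) :=
        Real.logb_le_logb_of_le (by norm_num) (by linarith) (ih hk')
      have h2 : 0 ≤ Real.logb 2 ((Real.logb 2)^[k] (r:ℝ)) :=
        Real.logb_nonneg (by norm_num) hLk.le
      have hcd : 1 ≤ c * (d:ℝ) := by
        have := mul_le_mul hc (show (1:ℝ) ≤ (d:ℝ) by linarith) zero_le_one (by linarith : (0:ℝ) ≤ c)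
        linarith
      have h3 : 0 ≤ Real.logb 2 (rr k) := Real.logb_nonneg (by norm_num) hrk.le
      have h4 : Real.logb 2 (rr k) ≤ c * (d:ℝ) * Real.logb 2 (rr k) :=
        le_mul_of_one_le_left h3 hcd
      linarith
  -- main induction
  intro k
  induction k with
  | zero =>
    intro _
    have hlam0 : lam 0 (d:ℝ) = (d:ℝ) := by
      unfold lam; simp
    rw [h0, hlam0]
    simp only [Function.iterate_zero, id_eq]
    have hr0 : (0:ℝ) ≤ (r:ℝ) := Nat.cast_nonneg r
    have h1 : (1:ℝ) ≤ c' * (d:ℝ) := by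
      have := mul_le_mul hc'1 (show (1:ℝ) ≤ (d:ℝ) by linarith) zero_le_one (by linarith)
      linarith
    calc (r:ℝ) ≤ c' * (d:ℝ) * (r:ℝ) := le_mul_of_one_le_left hr0 h1
  | succ k ih =>
    intro hk
    have hk' : k < logStar (r:ℝ) := by omega
    have hih := ih hk'
    set L : ℝ := (Real.logb 2)^[k] (r:ℝ) with hL
    set L' : ℝ := (Real.logb 2)^[k+1] (r:ℝ) with hL'
    have hL1 : 1 < L := aux_lt_iter hk'
    have hL'1 : 1 < L' := aux_lt_iter hk
    have hLL' : L' = Real.logb 2 L := by rw [hL', Function.iterate_succ_apply']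
    have hrk : 1 < rr k := lt_of_lt_of_le hL1 (hrr_lb k hk')
    have hlamk := hlam_one k
    have hlamk1 := hlam_one (k+1)
    -- log of upper bound
    have hsplit : Real.logb 2 (c' * lam k (d:ℝ) * L)
        = Real.logb 2 c' + Real.logb 2 (lam k (d:ℝ)) + L' := by
      rw [Real.logb_mul (by positivity) (by positivity),
        Real.logb_mul (by positivity) (by positivity), hLL']
    have hmono : Real.logb 2 (rr k) ≤ Real.logb 2 (c' * lam k (d:ℝ) * L) :=
      Real.logb_le_logb_of_le (by norm_num) (by linarith) hih
    have hlogc' : Real.logb 2 c' ≤ c' := by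
      have := aux_logb_le c' (by linarith)
      linarith
    have hlogc'0 : 0 ≤ Real.logb 2 c' := Real.logb_nonneg (by norm_num) hc'1
    have hloglam0 : 0 ≤ Real.logb 2 (lam k (d:ℝ)) :=
      Real.logb_nonneg (by norm_num) hlamk
    have hA : Real.logb 2 (rr k) ≤ (c' + 8 * Real.logb 2 (d:ℝ)) + L' := by
      have := hlam_log k
      rw [hsplit] at hmono
      linarith
    -- absorb constant into L'
    have hB : Real.logb 2 (rr k) ≤ (c' + 8 * Real.logb 2 (d:ℝ) + 1) * L' := by
      have hnn : 0 ≤ c' + 8 * Real.logb 2 (d:ℝ) := by linarith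
      nlinarith
    -- numeric key inequality
    have hkey : c * (c' + 8 * Real.logb 2 (d:ℝ) + 1) ≤ c' * Real.logb 2 (d:ℝ) := by
      rw [hc']
      nlinarith
    rw [hrec k]
    have hd1 : (1:ℝ) ≤ (d:ℝ) := by linarith
    calc c * (d:ℝ) * Real.logb 2 (rr k)
        ≤ c * (d:ℝ) * ((c' + 8 * Real.logb 2 (d:ℝ) + 1) * L') := by
          apply mul_le_mul_of_nonneg_left hB (by nlinarith)
      _ = (c * (c' + 8 * Real.logb 2 (d:ℝ) + 1)) * (d:ℝ) * L' := by ring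
      _ ≤ (c' * Real.logb 2 (d:ℝ)) * (d:ℝ) * L' := by
          apply mul_le_mul_of_nonneg_right
          · apply mul_le_mul_of_nonneg_right hkey (by linarith)
          · linarith
      _ = c' * ((d:ℝ) * Real.logb 2 (d:ℝ)) * L' := by ring
      _ ≤ c' * lam (k+1) (d:ℝ) * L' := by
          apply mul_le_mul_of_nonneg_right
          · apply mul_le_mul_of_nonneg_left (hlam_lb k) (by linarith)
          · linarith
end

section
/- Let d, m, e, r be positive integers with r ≥ 2. Let F be an m-variate polynomial over ℤ[z] such that F has degree less than d in each of the m variables and every coefficient of F is a polynomial in z of degree at most e − 1 whose integer coefficients all lie in {0, 1, …, r − 1}. Let ã = (ã_1, …, ã_m) ∈ (ℤ[z])^m be such that each ã_i is a polynomial in z of degree at most e − 1 whose integer coefficients all lie in {0, 1, …, r − 1}. Then F(ã) ∈ ℤ[z] has degree at most (e − 1)·((d − 1)·m + 1), and every coefficient of F(ã) is a nonnegative integer at most d^m · (e·(r − 1))^{(d−1)·m + 1}. -/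
open Polynomial Finset

/-- Coefficient bound for a product where one factor has bounded degree. -/
lemma mul_coeff_bound (e : ℕ) (he : 0 < e) (A B : ℤ) (hA : 0 ≤ A) (hB : 0 ≤ B)
    (p q : Polynomial ℤ)
    (hp : ∀ n, 0 ≤ p.coeff n ∧ p.coeff n ≤ A)
    (hq : ∀ n, 0 ≤ q.coeff n ∧ q.coeff n ≤ B)
    (hqd : q.natDegree ≤ e - 1) :
    ∀ n, 0 ≤ (p * q).coeff n ∧ (p * q).coeff n ≤ (e : ℤ) * (A * B) := by
  intro n
  rw [Polynomial.coeff_mul]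
  constructor
  · exact Finset.sum_nonneg fun x _ => mul_nonneg (hp x.1).1 (hq x.2).1
  · have hz : ∀ x ∈ Finset.HasAntidiagonal.antidiagonal n, p.coeff x.1 * q.coeff x.2 ≠ 0 → x.2 < e := by
      intro x _ hx
      by_contra h
      push_neg at h
      have : q.coeff x.2 = 0 :=
        Polynomial.coeff_eq_zero_of_natDegree_lt (lt_of_le_of_lt hqd (by omega))
      simp [this] at hx
    calc ∑ x ∈ Finset.HasAntidiagonal.antidiagonal n, p.coeff x.1 * q.coeff x.2
        = ∑ x ∈ (Finset.HasAntidiagonal.antidiagonal n).filter (fun x => x.2 < e),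
            p.coeff x.1 * q.coeff x.2 := (Finset.sum_filter_of_ne hz).symm
      _ ≤ ∑ _x ∈ (Finset.HasAntidiagonal.antidiagonal n).filter (fun x => x.2 < e), A * B := by
          refine Finset.sum_le_sum fun x _ => ?_
          exact mul_le_mul (hp x.1).2 (hq x.2).2 (hq x.2).1 hA
      _ = ((Finset.HasAntidiagonal.antidiagonal n).filter (fun x => x.2 < e)).card * (A * B) := by
          rw [Finset.sum_const, nsmul_eq_mul]
      _ ≤ (e : ℤ) * (A * B) := by
          refine mul_le_mul_of_nonneg_right ?_ (mul_nonneg hA hB)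
          have : ((Finset.HasAntidiagonal.antidiagonal n).filter (fun x => x.2 < e)).card ≤
              (Finset.range e).card := by
            refine Finset.card_le_card_of_injOn Prod.snd ?_ ?_
            · intro x hx
              simp only [Finset.mem_coe, Finset.mem_filter] at hx
              exact Finset.mem_range.2 hx.2
            · intro x hx y hy hxy
              have hx' := Finset.HasAntidiagonal.mem_antidiagonal.1 (Finset.mem_filter.1 hx).1
              have hy' := Finset.HasAntidiagonal.mem_antidiagonal.1 (Finset.mem_filter.1 hy).1
              have : x.1 = y.1 := by omega
              exact Prod.ext this hxy
          exact_mod_cast this.trans_eq (Finset.card_range e)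

/-- Degree and coefficient bounds for a product of a multiset of "good" polynomials. -/
lemma multiset_prod_bound (e r : ℕ) (he : 0 < e) (hr : 2 ≤ r) :
    ∀ (s : Multiset (Polynomial ℤ)),
      (∀ p ∈ s, p.natDegree ≤ e - 1 ∧ ∀ n, 0 ≤ p.coeff n ∧ p.coeff n ≤ (r : ℤ) - 1) →
      s.prod.natDegree ≤ Multiset.card s * (e - 1) ∧
      ∀ n, 0 ≤ s.prod.coeff n ∧
        s.prod.coeff n ≤ ((e : ℤ) * ((r : ℤ) - 1)) ^ (Multiset.card s) := by
  intro s
  induction s using Multiset.induction with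
  | empty =>
    intro _
    refine ⟨by simp, ?_⟩
    intro n
    simp only [Multiset.prod_zero, Multiset.card_zero, pow_zero, Polynomial.coeff_one]
    split <;> norm_num
  | cons p s ih =>
    intro h
    have hp := h p (Multiset.mem_cons_self p s)
    have hs := ih fun q hq => h q (Multiset.mem_cons_of_mem hq)
    rw [Multiset.prod_cons, Multiset.card_cons]
    have hr1 : (0 : ℤ) ≤ (r : ℤ) - 1 := by
      have : (2 : ℤ) ≤ (r : ℤ) := by exact_mod_cast hr
      linarith
    have hApos : (0 : ℤ) ≤ ((e : ℤ) * ((r : ℤ) - 1)) ^ (Multiset.card s) := by positivity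
    constructor
    · calc (p * s.prod).natDegree ≤ p.natDegree + s.prod.natDegree :=
            Polynomial.natDegree_mul_le
        _ ≤ (e - 1) + Multiset.card s * (e - 1) := Nat.add_le_add hp.1 hs.1
        _ = (Multiset.card s + 1) * (e - 1) := by ring
    · intro n
      have key := mul_coeff_bound e he (((e : ℤ) * ((r : ℤ) - 1)) ^ (Multiset.card s))
        ((r : ℤ) - 1) hApos hr1 s.prod p hs.2 hp.2 hp.1 n
      rw [mul_comm p s.prod]
      refine ⟨key.1, key.2.trans ?_⟩
      rw [pow_succ]
      ring_nf
      exact le_refl _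

/-- if `F ∈ (ℤ[z])[x_1, …, x_m]` has degree `< d` in each variable, each
coefficient of `F` is a polynomial in `z` of degree at most `e − 1` with integer
coefficients in `{0, …, r − 1}`, and each coordinate of `ã ∈ (ℤ[z])^m` is likewise, then
`F(ã)` has degree at most `(e − 1)·((d − 1)·m + 1)` in `z` and all of its coefficients are
nonnegative integers at most `d^m·(e·(r − 1))^{(d−1)·m+1}`. -/
theorem eval_degree_coeff_bound (d m e r : ℕ)
    (hd : 0 < d) (hm : 0 < m) (he : 0 < e) (hr : 2 ≤ r)
    (F : MvPolynomial (Fin m) (Polynomial ℤ))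
    (hFdeg : ∀ i, F.degreeOf i < d)
    (hFcoeff : ∀ a : Fin m →₀ ℕ, (F.coeff a).natDegree ≤ e - 1 ∧
      ∀ n : ℕ, 0 ≤ (F.coeff a).coeff n ∧ (F.coeff a).coeff n ≤ (r : ℤ) - 1)
    (atil : Fin m → Polynomial ℤ)
    (hatil : ∀ i, (atil i).natDegree ≤ e - 1 ∧
      ∀ n : ℕ, 0 ≤ (atil i).coeff n ∧ (atil i).coeff n ≤ (r : ℤ) - 1) :
    (MvPolynomial.eval atil F).natDegree ≤ (e - 1) * ((d - 1) * m + 1) ∧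
    ∀ n : ℕ, 0 ≤ (MvPolynomial.eval atil F).coeff n ∧
      (MvPolynomial.eval atil F).coeff n
        ≤ (d : ℤ) ^ m * ((e : ℤ) * ((r : ℤ) - 1)) ^ ((d - 1) * m + 1) := by
  classical
  -- the multiset of factors of a term
  set s : (Fin m →₀ ℕ) → Multiset (Polynomial ℤ) :=
    fun a => F.coeff a ::ₘ a.toMultiset.map atil with hs_def
  have hs_mem : ∀ a, ∀ p ∈ s a,
      p.natDegree ≤ e - 1 ∧ ∀ n, 0 ≤ p.coeff n ∧ p.coeff n ≤ (r : ℤ) - 1 := by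
    intro a p hp
    rcases Multiset.mem_cons.1 hp with h | h
    · exact h ▸ hFcoeff a
    · rcases Multiset.mem_map.1 h with ⟨i, _, rfl⟩
      exact hatil i
  have hs_prod : ∀ a : Fin m →₀ ℕ,
      (s a).prod = F.coeff a * ∏ i ∈ a.support, atil i ^ a i := by
    intro a
    rw [hs_def]
    simp only [Multiset.prod_cons]
    congr 1
    rw [Finsupp.toMultiset_map, Finsupp.prod_toMultiset,
      Finsupp.prod_mapDomain_index (fun p => pow_zero p) (fun p m n => pow_add p m n)]
    rfl
  have hs_card : ∀ a : Fin m →₀ ℕ,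
      Multiset.card (s a) = (a.sum fun _ n => n) + 1 := by
    intro a
    rw [hs_def]
    simp [Finsupp.card_toMultiset, Finsupp.sum]
  -- each exponent vector in the support is small
  have hsupp_lt : ∀ a ∈ F.support, ∀ i, a i < d := by
    intro a ha i
    exact (MvPolynomial.degreeOf_lt_iff hd).1 (hFdeg i) a ha
  have hsum_le : ∀ a ∈ F.support, (a.sum fun _ n => n) ≤ (d - 1) * m := by
    intro a ha
    have : (a.sum fun _ n => n) = ∑ i ∈ a.support, a i := rfl
    rw [this]
    calc ∑ i ∈ a.support, a i ≤ ∑ i ∈ a.support, (d - 1) :=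
          Finset.sum_le_sum fun i _ => by have := hsupp_lt a ha i; omega
      _ ≤ ∑ _i ∈ (Finset.univ : Finset (Fin m)), (d - 1) :=
          Finset.sum_le_sum_of_subset (Finset.subset_univ _)
      _ = m * (d - 1) := by simp [Finset.card_univ, mul_comm]
      _ = (d - 1) * m := mul_comm _ _
  have hr1 : (1 : ℤ) ≤ (r : ℤ) - 1 := by
    have : (2 : ℤ) ≤ (r : ℤ) := by exact_mod_cast hr
    linarith
  have hB1 : (1 : ℤ) ≤ (e : ℤ) * ((r : ℤ) - 1) := by
    have he1 : (1 : ℤ) ≤ (e : ℤ) := by exact_mod_cast he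
    nlinarith
  -- card of support
  have hcard : F.support.card ≤ d ^ m := by
    have h1 : F.support.card ≤ (Finset.univ : Finset (Fin m → Fin d)).card := by
      refine Finset.card_le_card_of_injOn
        (fun a i => (⟨min (a i) (d - 1), by omega⟩ : Fin d))
        (fun _ _ => Finset.mem_univ _) ?_
      intro a ha b hb hab
      ext i
      have hai := hsupp_lt a ha i
      have hbi := hsupp_lt b hb i
      have := congrFun hab i
      simp only [Fin.mk.injEq] at this
      omega
    simpa [Finset.card_univ, Fintype.card_fun] using h1
  rw [MvPolynomial.eval_eq]
  constructor
  · refine Polynomial.natDegree_sum_le_of_forall_le _ _ fun a ha => ?_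
    have hb := (multiset_prod_bound e r he hr (s a) (hs_mem a)).1
    rw [hs_prod a, hs_card a] at hb
    calc (F.coeff a * ∏ i ∈ a.support, atil i ^ a i).natDegree
        ≤ ((a.sum fun _ n => n) + 1) * (e - 1) := hb
      _ ≤ ((d - 1) * m + 1) * (e - 1) :=
          Nat.mul_le_mul_right _ (by have := hsum_le a ha; omega)
      _ = (e - 1) * ((d - 1) * m + 1) := mul_comm _ _
  · intro n
    rw [Polynomial.finset_sum_coeff]
    have hterm : ∀ a : Fin m →₀ ℕ,
        0 ≤ (F.coeff a * ∏ i ∈ a.support, atil i ^ a i).coeff n := by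
      intro a
      have hb := ((multiset_prod_bound e r he hr (s a) (hs_mem a)).2 n).1
      rwa [hs_prod a] at hb
    constructor
    · exact Finset.sum_nonneg fun a _ => hterm a
    · calc ∑ a ∈ F.support, (F.coeff a * ∏ i ∈ a.support, atil i ^ a i).coeff n
          ≤ ∑ _a ∈ F.support, ((e : ℤ) * ((r : ℤ) - 1)) ^ ((d - 1) * m + 1) := by
            refine Finset.sum_le_sum fun a ha => ?_
            have hb := ((multiset_prod_bound e r he hr (s a) (hs_mem a)).2 n).2
            rw [hs_prod a, hs_card a] at hb
            refine hb.trans (pow_le_pow_right₀ hB1 ?_)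
            have := hsum_le a ha
            omega
        _ = (F.support.card : ℤ) * ((e : ℤ) * ((r : ℤ) - 1)) ^ ((d - 1) * m + 1) := by
            rw [Finset.sum_const, nsmul_eq_mul]
        _ ≤ (d : ℤ) ^ m * ((e : ℤ) * ((r : ℤ) - 1)) ^ ((d - 1) * m + 1) := by
            refine mul_le_mul_of_nonneg_right ?_ (by positivity)
            exact_mod_cast hcard
end
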